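/- arXiv:1608.06612 — 10 statements merged into one kernel-verified Lean document; each statement's English description precedes it below -/
import Mathlib

section
/- Let T be a finite tree (a finite connected acyclic combinatorial graph) with vertex set V, and let f : V → ℝ^d be any map, so that each edge {u,v} of T is realized as the straight segment from f(u) to f(v). Let L = Σ_{edges {u,v} of T} ‖f(u) − f(v)‖ be the total length of the embedded tree. Then there exists a point z ∈ ℝ^d such that ‖f(v) − z‖ ≤ L/2 for every vertex v ∈ V; consequently the closed ball of radius L/2 centered at z contains every edge segment of the embedded tree. -/
/-!
Induct on the number of vertices, for connected graphs. Delete a vertex `v` whose removal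
keeps the graph connected, and let `y` be a neighbour of `v` at distance `ℓ`. The rest of the
graph has total length `L' ≤ L - ℓ`, so by induction it lies in a ball `B(z', L'/2)`, and `f v`
is within `ℓ + L'/2` of `z'`. Moving the centre by `ℓ/2` towards `f v` gives a ball of radius
`(L' + ℓ)/2 ≤ L/2` containing all vertices; by convexity it contains the edges as well.
-/

theorem exists_norm_sub_le_le {E : Type*} [SeminormedAddCommGroup E] [NormedSpace ℝ E]
    {x z : E} {δ ε : ℝ} (hδ : 0 ≤ δ) (hε : 0 ≤ ε) (h : ‖x - z‖ ≤ ε + δ) :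
    ∃ y, ‖x - y‖ ≤ δ ∧ ‖z - y‖ ≤ ε := by
  simpa only [dist_eq_norm, norm_sub_rev z] using exists_dist_le_le hδ hε (by rwa [dist_eq_norm])

namespace SimpleGraph

open Classical in
noncomputable def totalLength {V E : Type*} [SeminormedAddCommGroup E] [Fintype V]
    (G : SimpleGraph V) (f : V → E) : ℝ :=
  (∑ u, ∑ w, if G.Adj u w then ‖f u - f w‖ else 0) / 2

section

variable {V E : Type*} [SeminormedAddCommGroup E] [Fintype V] {G : SimpleGraph V}

theorem totalLength_nonneg (f : V → E) : 0 ≤ G.totalLength f := by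
  unfold totalLength
  positivity

open Classical in
theorem totalLength_induce_compl_singleton_add_norm_sub_le {v y : V} (hvy : G.Adj v y)
    (f : V → E) :
    (G.induce {v}ᶜ).totalLength (fun w ↦ f w) + ‖f v - f y‖ ≤ G.totalLength f := by
  set F : V → V → ℝ := fun u w ↦ if G.Adj u w then ‖f u - f w‖ else 0
  have hF : ∀ u w, 0 ≤ F u w := fun u w ↦ by positivity
  have hsub : ∀ g : V → ℝ, ∑ u : ({v}ᶜ : Set V), g u = ∑ u ∈ {v}ᶜ, g u := fun g ↦
    (Finset.sum_subtype _ (by simp) g).symm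
  have hinduce : (G.induce {v}ᶜ).totalLength (fun w ↦ f w)
      = (∑ u ∈ {v}ᶜ, ∑ w ∈ {v}ᶜ, F u w) / 2 := by
    change (∑ u : ({v}ᶜ : Set V), ∑ w : ({v}ᶜ : Set V), F u w) / 2 = _
    simp only [hsub, hsub fun u ↦ ∑ w ∈ {v}ᶜ, F u w]
  have hsplit : ∑ u, ∑ w, F u w
      = ∑ u, F u v + ∑ w ∈ {v}ᶜ, F v w + ∑ u ∈ {v}ᶜ, ∑ w ∈ {v}ᶜ, F u w := by
    simp only [Fintype.sum_eq_add_sum_compl v (fun w ↦ F _ w), Finset.sum_add_distrib,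
      Fintype.sum_eq_add_sum_compl v (fun u ↦ ∑ w ∈ {v}ᶜ, F u w)]
    ring
  have hcol : F y v ≤ ∑ u, F u v :=
    Finset.single_le_sum (fun u _ ↦ hF u v) (Finset.mem_univ y)
  have hrow : F v y ≤ ∑ w ∈ {v}ᶜ, F v w :=
    Finset.single_le_sum (fun w _ ↦ hF v w) (by simpa using hvy.ne')
  have hFyv : F y v = ‖f v - f y‖ := by simp [F, hvy.symm, norm_sub_rev]
  have hFvy : F v y = ‖f v - f y‖ := if_pos hvy
  rw [hinduce, totalLength, hsplit]
  linarith

end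

theorem Connected.exists_forall_norm_sub_le_totalLength_div_two {V E : Type*} [Fintype V]
    [SeminormedAddCommGroup E] [NormedSpace ℝ E] {G : SimpleGraph V}
    (hG : G.Connected) (f : V → E) : ∃ z, ∀ v, ‖f v - z‖ ≤ G.totalLength f / 2 := by
  refine Fintype.induction_subsingleton_or_nontrivial
    (P := fun V _ ↦ ∀ {G : SimpleGraph V}, G.Connected →
      ∀ f : V → E, ∃ z, ∀ v, ‖f v - z‖ ≤ G.totalLength f / 2) V ?_ ?_ hG f
  · intro V _ _ G hG f
    obtain ⟨v₀⟩ := hG.nonempty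
    refine ⟨f v₀, fun v ↦ ?_⟩
    rw [Subsingleton.elim v v₀, sub_self, norm_zero]
    exact div_nonneg (totalLength_nonneg f) zero_le_two
  · intro V _ _ ih G hG f
    classical
    obtain ⟨v, hv⟩ := hG.exists_connected_induce_compl_singleton_of_finite_nontrivial
    obtain ⟨y, hvy⟩ := hG.preconnected.exists_adj_of_nontrivial v
    obtain ⟨z', hz'⟩ := ih _ (Fintype.card_subtype_lt (p := (· ∈ ({v}ᶜ : Set V))) (x := v)
      (by simp)) hv (fun w ↦ f w)
    have hdrop := totalLength_induce_compl_singleton_add_norm_sub_le hvy f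
    set L' := (G.induce {v}ᶜ).totalLength (fun w ↦ f w)
    set ℓ := ‖f v - f y‖
    have hL' : 0 ≤ L' := totalLength_nonneg _
    have hfv : ‖f v - z'‖ ≤ ℓ / 2 + (ℓ / 2 + L' / 2) :=
      calc ‖f v - z'‖ ≤ ‖f v - f y‖ + ‖f y - z'‖ := norm_sub_le_norm_sub_add_norm_sub _ _ _
        _ ≤ ℓ + L' / 2 := by gcongr; exact hz' ⟨y, hvy.ne'⟩
        _ = _ := by ring
    obtain ⟨z, hvz, hz'z⟩ := exists_norm_sub_le_le (by positivity) (by positivity) hfv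
    refine ⟨z, fun w ↦ ?_⟩
    by_cases hw : w = v
    · subst hw
      linarith
    · calc ‖f w - z‖ ≤ ‖f w - z'‖ + ‖z' - z‖ := norm_sub_le_norm_sub_add_norm_sub _ _ _
        _ ≤ L' / 2 + ℓ / 2 := add_le_add (hz' ⟨w, hw⟩) hz'z
        _ ≤ G.totalLength f / 2 := by linarith

end SimpleGraph

open Classical in
/-- Any tree mapped into ℝ^d with straight edges of total length L is contained in a
closed ball of radius L/2. -/
theorem tree_in_ball_of_half_length (d : ℕ) (V : Type*) [Fintype V]
    (G : SimpleGraph V) (hT : G.IsTree)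
    (f : V → EuclideanSpace ℝ (Fin d))
    (L : ℝ)
    (hL : L = (∑ u : V, ∑ v : V, if G.Adj u v then ‖f u - f v‖ else 0) / 2) :
    ∃ z : EuclideanSpace ℝ (Fin d),
      (∀ v : V, ‖f v - z‖ ≤ L / 2) ∧
      (∀ u v : V, G.Adj u v →
        segment ℝ (f u) (f v) ⊆ Metric.closedBall z (L / 2)) := by
  obtain ⟨z, hz⟩ := hT.connected.exists_forall_norm_sub_le_totalLength_div_two f
  rw [show G.totalLength f = L from hL.symm] at hz
  have hball : ∀ v, f v ∈ Metric.closedBall z (L / 2) := fun v ↦ by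
    rw [Metric.mem_closedBall, dist_eq_norm]
    exact hz v
  exact ⟨z, hz, fun u v _ ↦ (convex_closedBall z (L / 2)).segment_subset (hball u) (hball v)⟩
end

section
/- Let S be the sphere of radius ρ > 0 centered at a point c in ℝ^d, and let A be a nonempty subset of S that is not contained in any open hemisphere of S, meaning: for every nonzero vector v ∈ ℝ^d there exists a ∈ A with ⟨a − c, v⟩ ≤ 0. Then every closed ball of ℝ^d containing A has radius at least ρ. -/
open scoped RealInnerProductSpace in
/-- If a nonempty subset A of the sphere of radius ρ centered at c is not contained in any
open hemisphere, then every closed ball containing A has radius at least ρ. -/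
theorem ball_radius_ge_of_no_open_hemisphere (d : ℕ) (ρ : ℝ) (hρ : 0 < ρ)
    (c : EuclideanSpace ℝ (Fin d)) (A : Set (EuclideanSpace ℝ (Fin d)))
    (hA : A.Nonempty)
    (hAS : A ⊆ Metric.sphere c ρ)
    (hhemi : ∀ v : EuclideanSpace ℝ (Fin d), v ≠ 0 → ∃ a ∈ A, ⟪a - c, v⟫ ≤ 0)
    (z : EuclideanSpace ℝ (Fin d)) (R : ℝ) (hball : A ⊆ Metric.closedBall z R) :
    ρ ≤ R := by
  by_cases hz : z = c
  · obtain ⟨a, ha⟩ := hA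
    have h1 : dist a z = ρ := by rw [hz]; exact hAS ha
    have h2 := hball ha
    rw [Metric.mem_closedBall] at h2
    linarith
  · obtain ⟨a, haA, hip⟩ := hhemi (z - c) (sub_ne_zero.mpr hz)
    have h1 : dist a c = ρ := hAS haA
    have h2 : dist a z ≤ R := hball haA
    have key : ρ ^ 2 ≤ (dist a z) ^ 2 := by
      have e1 : dist a z = ‖a - z‖ := dist_eq_norm a z
      have e2 : dist a c = ‖a - c‖ := dist_eq_norm a c
      have expand : ‖a - z‖ ^ 2 = ‖a - c‖ ^ 2 - 2 * ⟪a - c, z - c⟫ + ‖z - c‖ ^ 2 := by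
        have : a - z = (a - c) - (z - c) := by abel
        rw [this, norm_sub_sq_real]
      have hnn : (0:ℝ) ≤ ‖z - c‖ ^ 2 := sq_nonneg _
      rw [e1, expand, ← e2, h1]
      nlinarith
    have hdz : 0 ≤ dist a z := dist_nonneg
    nlinarith
end

section
/- Fix d ≥ 1, n ≥ 1, and 0 < r < 1. Suppose x₁,…,xₙ ∈ ℝ^d form a configuration of n disjoint balls of radius r in the closed unit ball (‖xᵢ‖ ≤ 1 − r for all i, and ‖xᵢ − xⱼ‖ ≥ 2r for i ≠ j), and suppose this configuration admits a connected balanced stress graph. Then r ≥ 1/n. -/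
/-!
Every boundary contact `(i, y)` forces `x i = (1 - r) • y`, so the boundary balance reads
`∑ b • y = 0`; testing it against `y - z` shows that the total boundary stress `B` is at most
`∑ b ‖y - z‖ ≤ ∑ b (r + ‖x i - z‖)` for every point `z`. The contact identity also shows that a
boundary point touches a single ball, so connectivity of the stress graph puts all balls touching
the sphere into one component `R` of the contact graph, whose edges have length `2r`. Graph
distances from a vertex of `R` are dominated by `0, 1, …, m - 1` (`m = #R`), so averaging `z`
over the centers of `R` gives `m B ≤ r m² B`, i.e. `1 ≤ r m ≤ r n`. Boundary edges exist because
a stress supported on internal edges alone would have zero virial `∑ w ‖x i - x j‖`.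
-/

/-- A balanced stress graph for a configuration `x` of `n` disjoint balls of radius `r`
in the closed unit ball of `ℝ^d`.  Internal edges are the unordered pairs `{i, j}` where
the symmetric weight function `w` is positive; boundary edges are the pairs `(i, y)` with
`y` a boundary point (a point of the unit sphere in the finite set `Y`) where the weight
function `b` is positive. -/
structure BalancedStressGraph (d n : ℕ) (r : ℝ)
    (x : Fin n → EuclideanSpace ℝ (Fin d)) where
  /-- the boundary points, lying on the unit sphere -/
  Y : Finset (EuclideanSpace ℝ (Fin d))
  /-- weights of the internal edges (an edge is present iff its weight is positive) -/
  w : Fin n → Fin n → ℝ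
  /-- weights of the boundary edges (an edge is present iff its weight is positive) -/
  b : Fin n → EuclideanSpace ℝ (Fin d) → ℝ
  hY : ∀ y ∈ Y, ‖y‖ = 1
  w_symm : ∀ i j, w i j = w j i
  w_nonneg : ∀ i j, 0 ≤ w i j
  /-- internal edges join distinct centers at distance exactly 2r -/
  w_edge : ∀ i j, 0 < w i j → i ≠ j ∧ ‖x i - x j‖ = 2 * r
  b_nonneg : ∀ i y, 0 ≤ b i y
  /-- boundary edges join a center to a boundary point at distance exactly r -/
  b_edge : ∀ i y, 0 < b i y → y ∈ Y ∧ ‖x i - y‖ = r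
  /-- every boundary point lies on some boundary edge -/
  Y_covered : ∀ y ∈ Y, ∃ i, 0 < b i y
  /-- the edge set is nonempty -/
  edges_nonempty : (∃ i j, 0 < w i j) ∨ (∃ i y, 0 < b i y)
  /-- the outward-pushing mechanical stresses at each center sum to zero -/
  balance_int : ∀ i, (∑ j, (w i j / ‖x i - x j‖) • (x i - x j))
      + (∑ y ∈ Y, (b i y / ‖x i - y‖) • (x i - y)) = 0
  /-- the mechanical stresses on the boundary points sum to zero -/
  balance_bd : (∑ i, ∑ y ∈ Y, (b i y / ‖y - x i‖) • (y - x i)) = 0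

/-- The adjacency relation of the stress graph, on the disjoint union of the index set of
centers and the space of possible boundary points. -/
def BalancedStressGraph.Adj {d n : ℕ} {r : ℝ} {x : Fin n → EuclideanSpace ℝ (Fin d)}
    (S : BalancedStressGraph d n r x) :
    (Fin n ⊕ EuclideanSpace ℝ (Fin d)) → (Fin n ⊕ EuclideanSpace ℝ (Fin d)) → Prop
  | Sum.inl i, Sum.inl j => 0 < S.w i j
  | Sum.inl i, Sum.inr y => 0 < S.b i y
  | Sum.inr y, Sum.inl i => 0 < S.b i y
  | Sum.inr _, Sum.inr _ => False

/-- A vertex of the stress graph: a center or boundary point incident to at least one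
edge. -/
def BalancedStressGraph.IsVertex {d n : ℕ} {r : ℝ} {x : Fin n → EuclideanSpace ℝ (Fin d)}
    (S : BalancedStressGraph d n r x) (u : Fin n ⊕ EuclideanSpace ℝ (Fin d)) : Prop :=
  ∃ u', S.Adj u u'

/-- The stress graph is connected: any two of its vertices are joined by a path. -/
def BalancedStressGraph.Connected {d n : ℕ} {r : ℝ}
    {x : Fin n → EuclideanSpace ℝ (Fin d)} (S : BalancedStressGraph d n r x) : Prop :=
  ∀ u v, S.IsVertex u → S.IsVertex v → Relation.ReflTransGen S.Adj u v


open Finset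
open scoped RealInnerProductSpace

theorem Finset.two_mul_sum_le_card_mul_card_sub_one {ι : Type*} [DecidableEq ι]
    (s : Finset ι) (f : ι → ℕ) (h : ∀ v ∈ s, ∀ t < f v, t + 1 ≤ #{w ∈ s | f w ≤ t}) :
    2 * ∑ v ∈ s, f v ≤ #s * (#s - 1) := by
  induction s using Finset.induction_on_max_value f with
  | empty => simp
  | insert a s ha hmax ih =>
    have hfilter : ∀ t < f a, {w ∈ insert a s | f w ≤ t} = {w ∈ s | f w ≤ t} := by
      intro t ht
      rw [filter_insert, if_neg (by omega)]
    have hs : 2 * ∑ v ∈ s, f v ≤ #s * (#s - 1) :=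
      ih fun v hv t ht ↦ hfilter t (ht.trans_le (hmax v hv)) ▸ h v (mem_insert_of_mem hv) t ht
    have ha_le : f a ≤ #s := by
      rcases Nat.eq_zero_or_pos (f a) with h0 | hpos
      · omega
      · have := h a (mem_insert_self a s) (f a - 1) (by omega)
        rw [hfilter _ (by omega)] at this
        have := card_filter_le s (fun w ↦ f w ≤ f a - 1)
        omega
    rw [sum_insert ha, card_insert_of_notMem ha]
    rcases Nat.eq_zero_or_pos #s with h0 | hpos
    · simp_all
    · obtain ⟨k, hk⟩ := Nat.exists_eq_add_of_lt hpos
      rw [hk] at hs ha_le ⊢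
      simp only [Nat.add_sub_cancel, zero_add] at hs ⊢
      nlinarith

namespace SimpleGraph

variable {V : Type*} {G : SimpleGraph V} {u v : V}

theorem Reachable.exists_dist_eq (h : G.Reachable u v) {t : ℕ} (ht : t ≤ G.dist u v) :
    ∃ w, G.Reachable u w ∧ G.dist u w = t := by
  obtain ⟨p, hp⟩ := h.exists_walk_length_eq_dist
  have hreach : G.Reachable u (p.getVert t) := ⟨p.take t⟩
  refine ⟨p.getVert t, hreach, le_antisymm ?_ ?_⟩
  · have := G.dist_le (p.take t)
    rw [Walk.take_length] at this
    omega
  · have h1 := hreach.dist_triangle_left v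
    have h2 := G.dist_le (p.drop t)
    rw [Walk.drop_length] at h2
    omega

theorem two_mul_sum_dist_le [DecidableEq V] {R : Finset V}
    (hR : ∀ v, v ∈ R ↔ G.Reachable u v) :
    2 * ∑ v ∈ R, G.dist u v ≤ #R * (#R - 1) := by
  refine R.two_mul_sum_le_card_mul_card_sub_one _ fun v hv t ht ↦ ?_
  have : Nonempty V := ⟨u⟩
  choose! g hg using fun k (hk : k ≤ G.dist u v) ↦ ((hR v).1 hv).exists_dist_eq hk
  calc t + 1 = #(range (t + 1)) := (card_range _).symm
    _ ≤ #{w ∈ R | G.dist u w ≤ t} := by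
      refine card_le_card_of_injOn g (fun k hk ↦ ?_) fun k hk l hl hkl ↦ ?_
      · have hk : k ≤ t := Nat.lt_succ_iff.mp (mem_range.mp hk)
        obtain ⟨hgk, hdist⟩ := hg k (by omega)
        simpa [mem_filter, hR, hdist] using ⟨hgk, hk⟩
      · have hk : k ≤ t := Nat.lt_succ_iff.mp (mem_range.mp hk)
        have hl : l ≤ t := Nat.lt_succ_iff.mp (mem_range.mp hl)
        rw [← (hg k (by omega)).2, ← (hg l (by omega)).2, hkl]

theorem Walk.norm_sub_le_mul_length {α : Type*} [SeminormedAddCommGroup α] {f : V → α} {L : ℝ}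
    (hf : ∀ a b, G.Adj a b → ‖f a - f b‖ ≤ L) (p : G.Walk u v) :
    ‖f u - f v‖ ≤ L * p.length := by
  induction p with
  | nil => simp
  | @cons a b c hadj q ih =>
    rw [length_cons, Nat.cast_succ]
    linarith [norm_sub_le_norm_sub_add_norm_sub (f a) (f b) (f c), hf a b hadj]

theorem Reachable.norm_sub_le_mul_dist {α : Type*} [SeminormedAddCommGroup α] {f : V → α} {L : ℝ}
    (hf : ∀ a b, G.Adj a b → ‖f a - f b‖ ≤ L) (h : G.Reachable u v) :
    ‖f u - f v‖ ≤ L * G.dist u v := by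
  obtain ⟨p, hp⟩ := h.exists_walk_length_eq_dist
  exact hp ▸ p.norm_sub_le_mul_length hf

end SimpleGraph

section InnerProductSpace

variable {E : Type*} [NormedAddCommGroup E] [InnerProductSpace ℝ E]

theorem eq_smul_of_norm_le_of_norm_sub_eq {r : ℝ} {x y : E} (hy : ‖y‖ = 1)
    (hxy : ‖x - y‖ = r) (hx : ‖x‖ ≤ 1 - r) : x = (1 - r) • y := by
  have hxn : ‖x‖ = 1 - r := by
    have := norm_sub_norm_le y x
    rw [norm_sub_rev, hxy, hy] at this
    linarith
  have hin : ⟪x, y⟫ = 1 - r := by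
    have := norm_sub_sq_real x y
    rw [hxy, hxn, hy] at this
    linear_combination this / 2
  have hsq : ‖x - (1 - r) • y‖ ^ 2 = 0 := by
    rw [norm_sub_sq_real, real_inner_smul_right, norm_smul, Real.norm_eq_abs, mul_pow, sq_abs,
      hxn, hin, hy]
    ring
  rwa [sq_eq_zero_iff, norm_eq_zero, sub_eq_zero] at hsq

theorem sum_sum_mul_norm_sub_sq_eq_zero {ι : Type*} [Fintype ι] {c : ι → ι → ℝ}
    (hc : ∀ i j, c i j = c j i) {x : ι → E} (h : ∀ i, ∑ j, c i j • (x i - x j) = 0) :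
    ∑ i, ∑ j, c i j * ‖x i - x j‖ ^ 2 = 0 := by
  have hleft : ∑ i, ∑ j, c i j * ⟪x i - x j, x i⟫ = 0 := by
    refine sum_eq_zero fun i _ ↦ ?_
    simpa only [sum_inner, real_inner_smul_left, inner_zero_left] using congr(⟪$(h i), x i⟫)
  have hright : ∑ i, ∑ j, c i j * ⟪x i - x j, x j⟫ = 0 := by
    rw [sum_comm, ← neg_eq_zero, ← hleft, ← sum_neg_distrib]
    refine sum_congr rfl fun j _ ↦ ?_
    rw [← sum_neg_distrib]
    refine sum_congr rfl fun i _ ↦ ?_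
    rw [hc, ← neg_sub, inner_neg_left]
    ring
  simp only [← real_inner_self_eq_norm_sq, inner_sub_right, mul_sub, sum_sub_distrib, hleft,
    hright, sub_zero]

theorem sum_le_sum_mul_norm_sub_of_sum_smul_eq_zero {ι : Type*} {s : Finset ι} {β : ι → ℝ}
    {y : ι → E} (hβ : ∀ k ∈ s, 0 ≤ β k) (hy : ∀ k ∈ s, ‖y k‖ = 1)
    (hbal : ∑ k ∈ s, β k • y k = 0) (z : E) :
    ∑ k ∈ s, β k ≤ ∑ k ∈ s, β k * ‖y k - z‖ := by
  have hz : ∑ k ∈ s, β k * ⟪z, y k⟫ = 0 := by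
    simpa only [inner_sum, real_inner_smul_right, inner_zero_right] using congr(⟪z, $hbal⟫)
  calc ∑ k ∈ s, β k = ∑ k ∈ s, β k * ⟪y k - z, y k⟫ := by
        simp only [inner_sub_left, mul_sub, sum_sub_distrib, hz, sub_zero]
        refine sum_congr rfl fun k hk ↦ ?_
        rw [real_inner_self_eq_norm_sq, hy k hk, one_pow, mul_one]
    _ ≤ ∑ k ∈ s, β k * ‖y k - z‖ := by
        refine sum_le_sum fun k hk ↦ mul_le_mul_of_nonneg_left ?_ (hβ k hk)
        simpa only [hy k hk, mul_one] using real_inner_le_norm (y k - z) (y k)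

end InnerProductSpace

namespace BalancedStressGraph

variable {d n : ℕ} {r : ℝ} {x : Fin n → EuclideanSpace ℝ (Fin d)}
  (S : BalancedStressGraph d n r x)

def contactGraph : SimpleGraph (Fin n) where
  Adj i j := 0 < S.w i j
  symm := ⟨fun i j (h : 0 < S.w i j) ↦ (S.w_symm i j ▸ h : 0 < S.w j i)⟩
  loopless := ⟨fun i h ↦ (S.w_edge i i h).1 rfl⟩

noncomputable def bdEdges : Finset (Fin n × EuclideanSpace ℝ (Fin d)) :=
  {p ∈ univ ×ˢ S.Y | 0 < S.b p.1 p.2}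

theorem exists_b_pos (hr0 : 0 < r) : ∃ i y, 0 < S.b i y := by
  by_contra! hb
  have hb0 : ∀ i y, S.b i y = 0 := fun i y ↦ le_antisymm (hb i y) (S.b_nonneg i y)
  obtain ⟨i₀, j₀, hw⟩ := S.edges_nonempty.resolve_right (by simpa using hb)
  have hc : ∀ i j, S.w i j / ‖x i - x j‖ = S.w j i / ‖x j - x i‖ := fun i j ↦ by
    rw [S.w_symm, norm_sub_rev]
  have hzero := sum_sum_mul_norm_sub_sq_eq_zero hc fun i ↦ by
    simpa [hb0] using S.balance_int i
  have hterm : ∀ i j, S.w i j / ‖x i - x j‖ * ‖x i - x j‖ ^ 2 = S.w i j * ‖x i - x j‖ :=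
    fun i j ↦ by
      rcases eq_or_ne ‖x i - x j‖ 0 with h | h
      · simp [h]
      · field_simp
  simp only [hterm] at hzero
  have hrow := (sum_eq_zero_iff_of_nonneg fun i _ ↦ sum_nonneg fun j _ ↦
    mul_nonneg (S.w_nonneg i j) (norm_nonneg _)).mp hzero i₀ (mem_univ _)
  have hentry := (sum_eq_zero_iff_of_nonneg fun j _ ↦
    mul_nonneg (S.w_nonneg i₀ j) (norm_nonneg _)).mp hrow j₀ (mem_univ _)
  rw [(S.w_edge i₀ j₀ hw).2] at hentry
  have : 0 < S.w i₀ j₀ * (2 * r) := by positivity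
  linarith

theorem mem_bdEdges {p : Fin n × EuclideanSpace ℝ (Fin d)} :
    p ∈ S.bdEdges ↔ 0 < S.b p.1 p.2 := by
  simpa [bdEdges] using fun h ↦ (S.b_edge p.1 p.2 h).1

theorem center_eq_smul_of_b_pos (hx : ∀ i, ‖x i‖ ≤ 1 - r) {i : Fin n}
    {y : EuclideanSpace ℝ (Fin d)} (h : 0 < S.b i y) : x i = (1 - r) • y :=
  eq_smul_of_norm_le_of_norm_sub_eq (S.hY y (S.b_edge i y h).1) (S.b_edge i y h).2 (hx i)

theorem eq_of_b_pos (hr0 : 0 < r) (hx : ∀ i, ‖x i‖ ≤ 1 - r)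
    (hsep : ∀ i j, i ≠ j → 2 * r ≤ ‖x i - x j‖) {i j : Fin n} {y : EuclideanSpace ℝ (Fin d)}
    (hi : 0 < S.b i y) (hj : 0 < S.b j y) : i = j := by
  by_contra hne
  have := hsep i j hne
  rw [S.center_eq_smul_of_b_pos hx hi, S.center_eq_smul_of_b_pos hx hj, sub_self,
    norm_zero] at this
  linarith

/-- A boundary point touches a single center, so collapsing every boundary point onto it turns
paths of the stress graph into walks of the contact graph. -/
theorem reachable_of_b_pos (hS : S.Connected)
    (huniq : ∀ i j y, 0 < S.b i y → 0 < S.b j y → i = j) {i j : Fin n}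
    {y y' : EuclideanSpace ℝ (Fin d)} (hi : 0 < S.b i y) (hj : 0 < S.b j y') :
    S.contactGraph.Reachable i j := by
  classical
  let π : Fin n ⊕ EuclideanSpace ℝ (Fin d) → Fin n :=
    Sum.elim id fun z ↦ if h : ∃ k, 0 < S.b k z then h.choose else i
  have hπ : ∀ k z, 0 < S.b k z → π (.inr z) = k := fun k z hk ↦ by
    have h : ∃ k, 0 < S.b k z := ⟨k, hk⟩
    simpa [π, h] using huniq _ _ _ h.choose_spec hk
  have hpath := hS (.inl i) (.inl j) ⟨.inr y, hi⟩ ⟨.inr y', hj⟩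
  rw [SimpleGraph.reachable_iff_reflTransGen]
  refine Relation.ReflTransGen.lift' π (fun u v huv ↦ ?_) _ _ hpath
  rcases u with a | z <;> rcases v with c | z'
  · exact .single huv
  · simp only [Function.onFun, hπ a z' huv]
    exact .refl
  · simp only [Function.onFun, hπ c z huv]
    exact .refl
  · exact huv.elim

theorem sum_b_smul_eq_zero (hr0 : 0 < r) (hx : ∀ i, ‖x i‖ ≤ 1 - r) :
    ∑ p ∈ S.bdEdges, S.b p.1 p.2 • p.2 = 0 := by
  rw [← S.balance_bd, ← sum_product', bdEdges, sum_filter]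
  refine sum_congr rfl fun p _ ↦ ?_
  split_ifs with h
  · have hsub : p.2 - x p.1 = r • p.2 := by
      rw [S.center_eq_smul_of_b_pos hx h]
      module
    rw [hsub, norm_smul, Real.norm_of_nonneg hr0.le, S.hY _ (S.b_edge _ _ h).1, mul_one,
      smul_smul, div_mul_cancel₀ _ hr0.ne']
  · simp [le_antisymm (not_lt.mp h) (S.b_nonneg _ _)]

theorem sum_b_le_sum_b_mul (hr0 : 0 < r) (hx : ∀ i, ‖x i‖ ≤ 1 - r)
    (z : EuclideanSpace ℝ (Fin d)) :
    ∑ p ∈ S.bdEdges, S.b p.1 p.2 ≤ ∑ p ∈ S.bdEdges, S.b p.1 p.2 * (r + ‖x p.1 - z‖) := by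
  have hunit : ∀ p ∈ S.bdEdges, ‖p.2‖ = 1 := fun p hp ↦
    S.hY _ (S.b_edge _ _ (S.mem_bdEdges.mp hp)).1
  refine (sum_le_sum_mul_norm_sub_of_sum_smul_eq_zero (fun p _ ↦ S.b_nonneg _ _) hunit
    (S.sum_b_smul_eq_zero hr0 hx) z).trans
    (sum_le_sum fun p hp ↦ mul_le_mul_of_nonneg_left ?_ (S.b_nonneg _ _))
  have hr := (S.b_edge _ _ (S.mem_bdEdges.mp hp)).2
  calc ‖p.2 - z‖ ≤ ‖p.2 - x p.1‖ + ‖x p.1 - z‖ := norm_sub_le_norm_sub_add_norm_sub _ _ _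
    _ = r + ‖x p.1 - z‖ := by rw [norm_sub_rev, hr]

theorem sum_norm_sub_le (hr : 0 ≤ r) {u : Fin n} {R : Finset (Fin n)}
    (hR : ∀ v, v ∈ R ↔ S.contactGraph.Reachable u v) :
    ∑ v ∈ R, ‖x u - x v‖ ≤ r * ↑(#R * (#R - 1)) := by
  have hedge : ∀ a b, S.contactGraph.Adj a b → ‖x a - x b‖ ≤ 2 * r :=
    fun a b h ↦ (S.w_edge a b h).2.le
  calc ∑ v ∈ R, ‖x u - x v‖ ≤ ∑ v ∈ R, 2 * r * S.contactGraph.dist u v :=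
        sum_le_sum fun v hv ↦ ((hR v).mp hv).norm_sub_le_mul_dist hedge
    _ = r * ↑(2 * ∑ v ∈ R, S.contactGraph.dist u v) := by
        rw [← mul_sum]
        push_cast
        ring
    _ ≤ r * ↑(#R * (#R - 1)) := by
        have := S.contactGraph.two_mul_sum_dist_le hR
        gcongr

theorem one_le_mul_card (hr0 : 0 < r) (hx : ∀ i, ‖x i‖ ≤ 1 - r) {u : Fin n}
    {R : Finset (Fin n)} (hR : ∀ v, v ∈ R ↔ S.contactGraph.Reachable u v)
    (hmem : ∀ p ∈ S.bdEdges, p.1 ∈ R) (hne : S.bdEdges.Nonempty) : 1 ≤ r * #R := by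
  set m := #R
  set B := ∑ p ∈ S.bdEdges, S.b p.1 p.2
  have hB : 0 < B := sum_pos (fun p hp ↦ S.mem_bdEdges.mp hp) hne
  have hm : 1 ≤ m := card_pos.mpr ⟨_, hmem _ hne.choose_spec⟩
  have hspread : ∀ i ∈ R, ∑ v ∈ R, ‖x i - x v‖ ≤ r * ↑(m * (m - 1)) := fun i hi ↦
    S.sum_norm_sub_le hr0.le fun v ↦ by
      rw [hR] at hi ⊢
      exact ⟨hi.symm.trans, hi.trans⟩
  have key : m * B ≤ m * B * (r * m) := calc
    m * B = ∑ _v ∈ R, B := by simp [m]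
    _ ≤ ∑ v ∈ R, ∑ p ∈ S.bdEdges, S.b p.1 p.2 * (r + ‖x p.1 - x v‖) :=
        sum_le_sum fun v _ ↦ S.sum_b_le_sum_b_mul hr0 hx (x v)
    _ = ∑ p ∈ S.bdEdges, S.b p.1 p.2 * (m * r + ∑ v ∈ R, ‖x p.1 - x v‖) := by
        rw [sum_comm]
        refine sum_congr rfl fun p _ ↦ ?_
        rw [← mul_sum, sum_add_distrib, sum_const, nsmul_eq_mul]
    _ ≤ ∑ p ∈ S.bdEdges, S.b p.1 p.2 * (m * r + r * ↑(m * (m - 1))) :=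
        sum_le_sum fun p hp ↦ by
          gcongr
          · exact S.b_nonneg _ _
          · exact hspread _ (hmem p hp)
    _ = m * B * (r * m) := by
        rw [← sum_mul]
        push_cast [Nat.cast_sub hm]
        ring
  have hmB : 0 < m * B := mul_pos (by exact_mod_cast hm) hB
  exact le_of_mul_le_mul_left (by simpa using key) hmB

end BalancedStressGraph

theorem radius_ge_inv_n_of_balanced_general (d n : ℕ)
    (r : ℝ) (hr0 : 0 < r)
    (x : Fin n → EuclideanSpace ℝ (Fin d))
    (hx : ∀ i, ‖x i‖ ≤ 1 - r)
    (hsep : ∀ i j, i ≠ j → 2 * r ≤ ‖x i - x j‖)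
    (S : BalancedStressGraph d n r x) (hS : S.Connected) :
    1 / (n : ℝ) ≤ r := by
  classical
  obtain ⟨i₀, y₀, h₀⟩ := S.exists_b_pos hr0
  set R : Finset (Fin n) := {v | S.contactGraph.Reachable i₀ v}
  have hmem : ∀ p ∈ S.bdEdges, p.1 ∈ R := fun p hp ↦ by
    simpa [R] using S.reachable_of_b_pos hS (fun _ _ _ ↦ S.eq_of_b_pos hr0 hx hsep) h₀
      (S.mem_bdEdges.mp hp)
  have hrR : 1 ≤ r * #R :=
    S.one_le_mul_card hr0 hx (u := i₀) (fun v ↦ by simp [R]) hmem ⟨(i₀, y₀), S.mem_bdEdges.mpr h₀⟩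
  have hRn : (#R : ℝ) ≤ n := by exact_mod_cast (card_le_univ R).trans_eq (Fintype.card_fin n)
  have hn : (0 : ℝ) < n := by nlinarith
  rw [div_le_iff₀ hn]
  nlinarith

/-- If a configuration of `n` disjoint balls of radius `r` in the closed unit ball of
`ℝ^d` admits a connected balanced stress graph, then `r ≥ 1/n`. -/
theorem radius_ge_inv_n_of_balanced (d n : ℕ) (hd : 1 ≤ d) (hn : 1 ≤ n)
    (r : ℝ) (hr0 : 0 < r) (hr1 : r < 1)
    (x : Fin n → EuclideanSpace ℝ (Fin d))
    (hx : ∀ i, ‖x i‖ ≤ 1 - r)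
    (hsep : ∀ i j, i ≠ j → 2 * r ≤ ‖x i - x j‖)
    (S : BalancedStressGraph d n r x) (hS : S.Connected) :
    1 / (n : ℝ) ≤ r :=
  radius_ge_inv_n_of_balanced_general d n r hr0 x hx hsep S hS
end

section
/- Let 0 < r < 1, and suppose x₁, x₂, x₃, x₄ ∈ ℝ² satisfy ‖xᵢ‖ ≤ 1 − r for all i and ‖xᵢ − xⱼ‖ ≥ 2r for all i ≠ j. Then r ≤ 1/(1 + √2). (Equivalently: for r > 1/(1 + √2), there is no configuration of 4 disjoint disks of radius r in the closed unit disk.) -/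
set_option maxHeartbeats 800000

/-- Four disjoint disks of radius r in the closed unit disk force r ≤ 1/(1 + √2). -/
theorem four_disks_radius_le (r : ℝ) (hr0 : 0 < r) (hr1 : r < 1)
    (x : Fin 4 → EuclideanSpace ℝ (Fin 2))
    (hx : ∀ i, ‖x i‖ ≤ 1 - r)
    (hsep : ∀ i j, i ≠ j → 2 * r ≤ ‖x i - x j‖) :
    r ≤ 1 / (1 + Real.sqrt 2) := by
  -- squared norm bounds
  have hsq : ∀ i, (x i 0)^2 + (x i 1)^2 ≤ (1 - r)^2 := by
    intro i
    have h := hx i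
    rw [EuclideanSpace.norm_eq] at h
    simp only [Fin.sum_univ_two, Real.norm_eq_abs, sq_abs] at h
    have hnn : (0:ℝ) ≤ (x i 0)^2 + (x i 1)^2 := by positivity
    nlinarith [Real.sq_sqrt hnn, Real.sqrt_nonneg ((x i 0)^2 + (x i 1)^2)]
  -- a pair with nonnegative inner product
  have key : ∃ i j : Fin 4, i ≠ j ∧ 0 ≤ x i 0 * x j 0 + x i 1 * x j 1 := by
    by_contra hcon
    push_neg at hcon
    have h01 := hcon 0 1 (by decide)
    have h02 := hcon 0 2 (by decide)
    have h03 := hcon 0 3 (by decide)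
    have h12 := hcon 1 2 (by decide)
    have h13 := hcon 1 3 (by decide)
    have h23 := hcon 2 3 (by decide)
    set a0 := x 0 0 with ha0d; set a1 := x 0 1 with ha1d
    set b0 := x 1 0; set b1 := x 1 1
    set c0 := x 2 0; set c1 := x 2 1
    set d0 := x 3 0; set d1 := x 3 1
    have hA : 0 < a0^2 + a1^2 := by
      rcases le_or_gt (a0^2 + a1^2) 0 with h | h
      · have ha0 : a0 = 0 := by nlinarith [sq_nonneg a0, sq_nonneg a1]
        have ha1 : a1 = 0 := by nlinarith [sq_nonneg a0, sq_nonneg a1]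
        rw [ha0, ha1] at h01
        simp at h01
      · exact h
    have hc12 : (a0*b1 - a1*b0) * (a0*c1 - a1*c0) < 0 := by
      nlinarith [mul_pos (neg_pos.2 h01) (neg_pos.2 h02), mul_pos hA (neg_pos.2 h12)]
    have hc13 : (a0*b1 - a1*b0) * (a0*d1 - a1*d0) < 0 := by
      nlinarith [mul_pos (neg_pos.2 h01) (neg_pos.2 h03), mul_pos hA (neg_pos.2 h13)]
    have hc23 : (a0*c1 - a1*c0) * (a0*d1 - a1*d0) < 0 := by
      nlinarith [mul_pos (neg_pos.2 h02) (neg_pos.2 h03), mul_pos hA (neg_pos.2 h23)]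
    nlinarith [mul_pos_of_neg_of_neg hc12 hc13,
      mul_nonneg (sq_nonneg (a0*b1 - a1*b0)) (le_of_lt (neg_pos.2 hc23))]
  obtain ⟨i, j, hij, hpos⟩ := key
  have hd := hsep i j hij
  rw [EuclideanSpace.norm_eq] at hd
  simp only [Fin.sum_univ_two, Real.norm_eq_abs, sq_abs, PiLp.sub_apply] at hd
  have hnn : (0:ℝ) ≤ (x i 0 - x j 0)^2 + (x i 1 - x j 1)^2 := by positivity
  have hD : 4*r^2 ≤ (x i 0 - x j 0)^2 + (x i 1 - x j 1)^2 := by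
    nlinarith [Real.sq_sqrt hnn, hd, hr0]
  have h2 : 2*r^2 ≤ (1 - r)^2 := by
    nlinarith [hsq i, hsq j, hpos, hD]
  -- conclude
  have hs2 : Real.sqrt 2 ^ 2 = 2 := Real.sq_sqrt (by norm_num)
  have hs0 : (0:ℝ) ≤ Real.sqrt 2 := Real.sqrt_nonneg 2
  rw [le_div_iff₀ (by positivity)]
  nlinarith [sq_nonneg (r + 1 - Real.sqrt 2)]
end

section
/- Let r > 1/(1 + √2). If x and y are points of ℝ² with ‖x‖ ≤ 1 − r, ‖y‖ ≤ 1 − r, and ⟨x, y⟩ ≥ 0 (the angle that the segments from the origin to x and to y form at the origin is not obtuse), then ‖x − y‖ < 2r. -/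
open scoped RealInnerProductSpace in
/-- For r > 1/(1+√2), two points of the disk of radius 1−r whose position vectors form a
non-obtuse angle at the origin are at distance less than 2r. -/
theorem dist_lt_of_not_obtuse (r : ℝ) (hr : 1 / (1 + Real.sqrt 2) < r)
    (x y : EuclideanSpace ℝ (Fin 2))
    (hx : ‖x‖ ≤ 1 - r) (hy : ‖y‖ ≤ 1 - r)
    (hangle : 0 ≤ ⟪x, y⟫) :
    ‖x - y‖ < 2 * r := by
  have hs2 : Real.sqrt 2 ^ 2 = 2 := Real.sq_sqrt (by norm_num)
  have hs1 : (1:ℝ) < Real.sqrt 2 := by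
    nlinarith [Real.sqrt_nonneg 2]
  have hr0 : 0 < r := lt_trans (by positivity) hr
  have hkey : Real.sqrt 2 * (1 - r) < 2 * r := by
    have h := (div_lt_iff₀ (by positivity : (0:ℝ) < 1 + Real.sqrt 2)).mp hr
    nlinarith
  have hx0 := norm_nonneg x
  have hy0 := norm_nonneg y
  have hexp : ‖x - y‖ ^ 2 = ‖x‖ ^ 2 - 2 * ⟪x, y⟫ + ‖y‖ ^ 2 := by
    rw [@norm_sub_sq_real]
  have h1r : 0 ≤ 1 - r := le_trans hx0 hx
  have hsq : ‖x - y‖ ^ 2 < (2 * r) ^ 2 := by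
    nlinarith [mul_le_mul hx hx hx0 h1r, mul_le_mul hy hy hy0 h1r,
      mul_pos (sub_pos.mpr hkey) (by positivity : (0:ℝ) < 2 * r + Real.sqrt 2 * (1 - r))]
  nlinarith [norm_nonneg (x - y)]
end

section
/- For every r with 0 < r < 8/5, there is a continuous map f : S¹ × S¹ → ℝ² × ℝ² such that for every (θ₁, θ₂) ∈ S¹ × S¹, the two closed segments of length r with centers f(θ₁,θ₂)₁ and f(θ₁,θ₂)₂ and directions θ₁ and θ₂ respectively are disjoint and both contained in the closed unit disk of ℝ². (Two segments of any length less than 1.6 can spin independently in the unit disk.) -/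
/-!
Let `n = J θ₂` be the unit normal of the second direction and `a = √(1 - (r/2)²)`. The second
segment is placed on the chord `⟪x, n⟫ = a`, which has length exactly `r`. The disk of diameter
`1 + a` tangent to this chord and to the unit circle is centred at `-((1 - a)/2) • n`, so a segment
of length `r < 1 + a` centred there stays in the unit disk and strictly on the near side of the
chord, whatever its direction. For `r < 8/5` we have `a > 3/5`, hence `r < 1 + a`, and both
centres depend continuously on `θ₂` alone.
-/

open scoped RealInnerProductSpace

section InnerProductSpace

variable {E : Type*} [NormedAddCommGroup E] [InnerProductSpace ℝ E] {n u : E} {a t : ℝ}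

lemma norm_smul_add_smul_le_one_of_inner_eq_zero (hn : ‖n‖ = 1) (hu : ‖u‖ = 1)
    (hnu : ⟪n, u⟫ = 0) (h : a ^ 2 + t ^ 2 ≤ 1) : ‖a • n + t • u‖ ≤ 1 := by
  have hperp : ⟪a • n, t • u⟫ = 0 := by
    rw [real_inner_smul_left, real_inner_smul_right, hnu, mul_zero, mul_zero]
  have hsq : ‖a • n + t • u‖ ^ 2 = a ^ 2 + t ^ 2 := by
    rw [sq, norm_add_sq_eq_norm_sq_add_norm_sq_real hperp, norm_smul, norm_smul, hn, hu,
      Real.norm_eq_abs, Real.norm_eq_abs, mul_one, mul_one, ← sq, ← sq, sq_abs, sq_abs]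
  exact (sq_le_one_iff₀ (norm_nonneg _)).1 (hsq ▸ h)

lemma norm_smul_add_smul_le_one (hn : ‖n‖ = 1) (hu : ‖u‖ = 1) (h : |a| + |t| ≤ 1) :
    ‖a • n + t • u‖ ≤ 1 :=
  calc ‖a • n + t • u‖ ≤ ‖a • n‖ + ‖t • u‖ := norm_add_le _ _
    _ = |a| + |t| := by rw [norm_smul, norm_smul, hn, hu, Real.norm_eq_abs, Real.norm_eq_abs,
        mul_one, mul_one]
    _ ≤ 1 := h

lemma inner_smul_add_smul_le (hn : ‖n‖ = 1) (hu : ‖u‖ = 1) : ⟪a • n + t • u, n⟫ ≤ a + |t| := by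
  have hun : t * ⟪u, n⟫ ≤ |t| :=
    calc t * ⟪u, n⟫ ≤ |t| * |⟪u, n⟫| := by rw [← abs_mul]; exact le_abs_self _
      _ ≤ |t| * (‖u‖ * ‖n‖) := by gcongr; exact abs_real_inner_le_norm u n
      _ = |t| := by rw [hu, hn, mul_one, mul_one]
  rw [inner_add_left, real_inner_smul_left, real_inner_smul_left, real_inner_self_eq_norm_sq, hn]
  linarith

lemma inner_smul_add_smul_eq (hn : ‖n‖ = 1) (hun : ⟪u, n⟫ = 0) : ⟪a • n + t • u, n⟫ = a := by
  rw [inner_add_left, real_inner_smul_left, real_inner_smul_left, real_inner_self_eq_norm_sq, hn,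
    hun]
  ring

lemma chord_and_tangent_segments_inside_and_disjoint {u₁ u₂ : E} {r : ℝ} (hn : ‖n‖ = 1)
    (hu₁ : ‖u₁‖ = 1) (hu₂ : ‖u₂‖ = 1) (hnu₂ : ⟪n, u₂⟫ = 0) (ha : a ≤ 1) (hra : r < 1 + a)
    (hchord : a ^ 2 + (r / 2) ^ 2 ≤ 1) :
    (∀ t ∈ Set.Icc (-(r / 2)) (r / 2),
      ‖-((1 - a) / 2) • n + t • u₁‖ ≤ 1 ∧ ‖a • n + t • u₂‖ ≤ 1) ∧
    (∀ s ∈ Set.Icc (-(r / 2)) (r / 2), ∀ t ∈ Set.Icc (-(r / 2)) (r / 2),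
      -((1 - a) / 2) • n + s • u₁ ≠ a • n + t • u₂) := by
  have hb : |-((1 - a) / 2)| = (1 - a) / 2 := by rw [abs_neg, abs_of_nonneg (by linarith)]
  refine ⟨fun t ht => ⟨?_, ?_⟩, fun s hs t _ heq => ?_⟩
  · have ht' : |t| ≤ r / 2 := abs_le.2 ht
    exact norm_smul_add_smul_le_one hn hu₁ (by linarith)
  · have ht' : t ^ 2 ≤ (r / 2) ^ 2 := sq_le_sq' ht.1 ht.2
    exact norm_smul_add_smul_le_one_of_inner_eq_zero hn hu₂ hnu₂ (by linarith)
  · have hs' : |s| ≤ r / 2 := abs_le.2 hs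
    have hbelow := inner_smul_add_smul_le (a := -((1 - a) / 2)) (t := s) hn hu₁
    rw [heq, inner_smul_add_smul_eq hn (real_inner_comm n u₂ ▸ hnu₂)] at hbelow
    linarith

end InnerProductSpace

/-- Distance from the centre of the unit circle to a chord of length `r`. -/
noncomputable def chordDist (r : ℝ) : ℝ := √(1 - (r / 2) ^ 2)

lemma chordDist_le_one (r : ℝ) : chordDist r ≤ 1 :=
  Real.sqrt_le_one.2 (by nlinarith [sq_nonneg (r / 2)])

lemma chordDist_sq_add_sq {r : ℝ} (hr : (r / 2) ^ 2 ≤ 1) : chordDist r ^ 2 + (r / 2) ^ 2 = 1 := by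
  rw [chordDist, Real.sq_sqrt (by linarith)]
  ring

lemma lt_one_add_chordDist {r : ℝ} (hr0 : 0 ≤ r) (hr : r < 8 / 5) : r < 1 + chordDist r := by
  have : 3 / 5 < chordDist r := (Real.lt_sqrt (by norm_num)).2 (by nlinarith)
  linarith

/-- Two segments of any length r < 8/5 can spin independently in the closed unit disk:
there is a continuous choice of the two centers as a function of the two directions so
that the two segments are always disjoint and contained in the closed unit disk. -/
theorem two_segments_spin_independently (r : ℝ) (hr0 : 0 < r) (hr1 : r < 8 / 5) :
    ∃ f : Metric.sphere (0 : EuclideanSpace ℝ (Fin 2)) 1 ×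
          Metric.sphere (0 : EuclideanSpace ℝ (Fin 2)) 1 →
          EuclideanSpace ℝ (Fin 2) × EuclideanSpace ℝ (Fin 2),
      Continuous f ∧
      ∀ θ₁ θ₂ : Metric.sphere (0 : EuclideanSpace ℝ (Fin 2)) 1,
        (∀ t ∈ Set.Icc (-(r / 2)) (r / 2),
          ‖(f (θ₁, θ₂)).1 + t • (θ₁ : EuclideanSpace ℝ (Fin 2))‖ ≤ 1 ∧
          ‖(f (θ₁, θ₂)).2 + t • (θ₂ : EuclideanSpace ℝ (Fin 2))‖ ≤ 1) ∧
        (∀ s ∈ Set.Icc (-(r / 2)) (r / 2), ∀ t ∈ Set.Icc (-(r / 2)) (r / 2),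
          (f (θ₁, θ₂)).1 + s • (θ₁ : EuclideanSpace ℝ (Fin 2)) ≠
            (f (θ₁, θ₂)).2 + t • (θ₂ : EuclideanSpace ℝ (Fin 2))) := by
  have : Fact (Module.finrank ℝ (EuclideanSpace ℝ (Fin 2)) = 2) := ⟨finrank_euclideanSpace_fin⟩
  let J := (EuclideanSpace.basisFun (Fin 2) ℝ).toBasis.orientation.rightAngleRotation
  set a := chordDist r
  refine ⟨fun p => (-((1 - a) / 2) • J p.2, a • J p.2), by fun_prop, fun θ₁ θ₂ => ?_⟩
  have hθ₁ : ‖(θ₁ : EuclideanSpace ℝ (Fin 2))‖ = 1 := norm_eq_of_mem_sphere θ₁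
  have hθ₂ : ‖(θ₂ : EuclideanSpace ℝ (Fin 2))‖ = 1 := norm_eq_of_mem_sphere θ₂
  exact chord_and_tangent_segments_inside_and_disjoint ((J.norm_map _).trans hθ₂) hθ₁ hθ₂
    (Orientation.inner_rightAngleRotation_self _ _) (chordDist_le_one r)
    (lt_one_add_chordDist hr0.le hr1) (chordDist_sq_add_sq (by nlinarith)).le
end

section
/- Suppose two disjoint closed segments of the same length ℓ > 0 are contained in the closed unit disk of ℝ² and are perpendicular to each other (their direction vectors are orthogonal). Then ℓ ≤ 8/5. (The maximum length for which two segments can fit at right angles in the unit disk is 1.6.) -/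
/-!
Write `L = ℓ / 2`. In the orthonormal frame `(u₁, u₂)` the two segments meet exactly when the
corner point `c₁ + ⟪c₂ - c₁, u₁⟫ • u₁ = c₂ + ⟪c₁ - c₂, u₂⟫ • u₂` lies on both, so by disjointness
(and symmetry) `L < |⟪c₂ - c₁, u₁⟫|`. The endpoints of the first segment lie in the disk, whence
`|⟪c₁, u₁⟫| ≤ 1 - L`; those of the second give `⟪c₂, u₁⟫ ^ 2 ≤ 1 - L ^ 2`. Thus
`2 L - 1 < |⟪c₂, u₁⟫|`, and `(2 L - 1) ^ 2 < 1 - L ^ 2` means `L < 4 / 5`.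
-/

open scoped RealInnerProductSpace
open Module

theorem le_four_fifths_of_lt_abs_sub {a b L : ℝ} (ha : (|a| + L) ^ 2 ≤ 1) (hb : b ^ 2 + L ^ 2 ≤ 1)
    (hab : L < |b - a|) : L ≤ 4 / 5 := by
  have ha' : |a| + L ≤ 1 := (abs_le_of_sq_le_sq' (by rwa [one_pow]) zero_le_one).2
  have hb' : 2 * L - 1 < |b| := by linarith [abs_sub b a]
  rcases le_or_gt (2 * L - 1) 0 with hL | hL
  · linarith
  · nlinarith [sq_abs b, mul_self_lt_mul_self hL.le hb']

section

variable {E : Type*} [NormedAddCommGroup E] [InnerProductSpace ℝ E]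

theorem inner_smul_add_inner_smul_eq (hE : finrank ℝ E = 2) {u v : E} (hu : ‖u‖ = 1)
    (hv : ‖v‖ = 1) (huv : ⟪u, v⟫ = 0) (x : E) :
    ⟪u, x⟫ • u + ⟪v, x⟫ • v = x := by
  have hon : Orthonormal ℝ ![u, v] := by
    simp [orthonormal_vecCons_iff, hu, hv, huv]
  have := ((basisOfOrthonormalOfCardEqFinrank hon (by simp [hE])).toOrthonormalBasis
    (by simpa using hon)).sum_repr' x
  simpa [Fin.sum_univ_two] using this

theorem add_inner_smul_eq_add_inner_smul (hE : finrank ℝ E = 2) {u v : E} (hu : ‖u‖ = 1)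
    (hv : ‖v‖ = 1) (huv : ⟪u, v⟫ = 0) (c d : E) :
    c + ⟪d - c, u⟫ • u = d + ⟪c - d, v⟫ • v := by
  have h := inner_smul_add_inner_smul_eq hE hu hv huv (d - c)
  rw [← neg_sub d c, inner_neg_left, real_inner_comm, real_inner_comm v, neg_smul, ← sub_eq_add_neg, eq_sub_iff_add_eq, add_assoc, h, add_sub_cancel]

theorem norm_sq_add_two_mul_abs_inner_add_sq_le_one {c u : E} {L : ℝ} (hu : ‖u‖ = 1)
    (h_add : ‖c + L • u‖ ≤ 1) (h_sub : ‖c - L • u‖ ≤ 1) :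
    ‖c‖ ^ 2 + 2 * |L * ⟪c, u⟫| + L ^ 2 ≤ 1 := by
  have e_add := norm_add_sq_real c (L • u)
  have e_sub := norm_sub_sq_real c (L • u)
  rw [real_inner_smul_right, norm_smul, hu, mul_one, Real.norm_eq_abs, sq_abs] at e_add e_sub
  have s_add : ‖c + L • u‖ ^ 2 ≤ 1 := pow_le_one₀ (norm_nonneg _) h_add
  have s_sub : ‖c - L • u‖ ^ 2 ≤ 1 := pow_le_one₀ (norm_nonneg _) h_sub
  rcases abs_cases (L * ⟪c, u⟫) with ⟨h, -⟩ | ⟨h, -⟩ <;> rw [h] <;> linarith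

theorem le_four_fifths_of_lt_abs_inner_sub {c d u v : E} {L : ℝ} (hu : ‖u‖ = 1) (hv : ‖v‖ = 1)
    (hc_add : ‖c + L • u‖ ≤ 1) (hc_sub : ‖c - L • u‖ ≤ 1)
    (hd_add : ‖d + L • v‖ ≤ 1) (hd_sub : ‖d - L • v‖ ≤ 1) (hsep : L < |⟪d - c, u⟫|) :
    L ≤ 4 / 5 := by
  have hc := norm_sq_add_two_mul_abs_inner_add_sq_le_one hu hc_add hc_sub
  have hd := norm_sq_add_two_mul_abs_inner_add_sq_le_one hv hd_add hd_sub
  have sc : ⟪c, u⟫ ^ 2 ≤ ‖c‖ ^ 2 := by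
    simpa [hu] using pow_le_pow_left₀ (abs_nonneg _) (abs_real_inner_le_norm c u) 2
  have sd : ⟪d, u⟫ ^ 2 ≤ ‖d‖ ^ 2 := by
    simpa [hu] using pow_le_pow_left₀ (abs_nonneg _) (abs_real_inner_le_norm d u) 2
  refine le_four_fifths_of_lt_abs_sub (a := ⟪c, u⟫) (b := ⟪d, u⟫) ?_ ?_ (by rwa [← inner_sub_left])
  · have : L * |⟪c, u⟫| ≤ |L * ⟪c, u⟫| := by
      rw [abs_mul]; exact mul_le_mul_of_nonneg_right (le_abs_self L) (abs_nonneg _)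
    nlinarith [sq_abs ⟪c, u⟫]
  · linarith [abs_nonneg (L * ⟪d, v⟫)]

end

open scoped RealInnerProductSpace in
/-- Two disjoint perpendicular segments of the same length ℓ contained in the closed unit
disk satisfy ℓ ≤ 8/5. -/
theorem perpendicular_segments_length_le (ℓ : ℝ) (hℓ : 0 < ℓ)
    (c₁ c₂ u₁ u₂ : EuclideanSpace ℝ (Fin 2))
    (hu₁ : ‖u₁‖ = 1) (hu₂ : ‖u₂‖ = 1) (hperp : ⟪u₁, u₂⟫ = 0)
    (hin₁ : ∀ t ∈ Set.Icc (-(ℓ / 2)) (ℓ / 2), ‖c₁ + t • u₁‖ ≤ 1)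
    (hin₂ : ∀ t ∈ Set.Icc (-(ℓ / 2)) (ℓ / 2), ‖c₂ + t • u₂‖ ≤ 1)
    (hdisj : ∀ s ∈ Set.Icc (-(ℓ / 2)) (ℓ / 2), ∀ t ∈ Set.Icc (-(ℓ / 2)) (ℓ / 2),
      c₁ + s • u₁ ≠ c₂ + t • u₂) :
    ℓ ≤ 8 / 5 := by
  set L := ℓ / 2 with hL_def
  have hL : L ∈ Set.Icc (-L) L := ⟨by linarith, le_rfl⟩
  have hL' : -L ∈ Set.Icc (-L) L := ⟨le_rfl, by linarith⟩
  have h₁_sub : ‖c₁ - L • u₁‖ ≤ 1 := by simpa [sub_eq_add_neg] using hin₁ _ hL'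
  have h₂_sub : ‖c₂ - L • u₂‖ ≤ 1 := by simpa [sub_eq_add_neg] using hin₂ _ hL'
  have hsep : L < |⟪c₂ - c₁, u₁⟫| ∨ L < |⟪c₁ - c₂, u₂⟫| := by
    by_contra! h
    exact hdisj _ (abs_le.mp h.1) _ (abs_le.mp h.2) <|
      add_inner_smul_eq_add_inner_smul finrank_euclideanSpace_fin hu₁ hu₂ hperp c₁ c₂
  have : L ≤ 4 / 5 := hsep.elim
    (le_four_fifths_of_lt_abs_inner_sub hu₁ hu₂ (hin₁ _ hL) h₁_sub (hin₂ _ hL) h₂_sub)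
    (le_four_fifths_of_lt_abs_inner_sub hu₂ hu₁ (hin₂ _ hL) h₂_sub (hin₁ _ hL) h₁_sub)
  linarith
end

section
/- There exists a constant c > 0 such that for every j ≥ 1 and every r with 0 < r ≤ c/√j, there is a continuous map f : (S¹)^j → (ℝ²)^{2j} with the following properties for every θ = (θ₁,…,θ_j) ∈ (S¹)^j: writing f(θ) = (x₁,…,x_{2j}), (a) ‖x_k‖ ≤ 1 − r for all k; (b) ‖x_k − x_l‖ ≥ 2r for all k ≠ l; and (c) x_{2i} − x_{2i−1} = 2r·θᵢ for each i = 1,…,j (so the direction from the (2i−1)st disk to the 2i-th disk is θᵢ). In other words, for r ≲ 1/√j, j disjoint pairs of disks of radius r can spin independently inside the unit disk, each pair turning inside its own medium-sized disk. -/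
/-!
Place the centres of the `j` pairs on a square grid of mesh `4r` with `⌈√j⌉` points per side.
The `i`-th pair consists of the two disks centred at `p i ± r θᵢ`; as `θᵢ` turns they stay inside
the disk of radius `2r` around `p i`, and these disks are disjoint for distinct pairs. The grid
lies within distance `8r√j` of the origin, so for `r ≤ 1/(16√j)` everything fits in the unit disk.
-/

open Metric

noncomputable section

def gridPoint (s : ℝ) (q : ℕ × ℕ) : EuclideanSpace ℝ (Fin 2) :=
  !₂[s * q.1, s * q.2]

theorem norm_gridPoint_le {s : ℝ} (hs : 0 ≤ s) (q : ℕ × ℕ) :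
    ‖gridPoint s q‖ ≤ s * (q.1 + q.2) := by
  rw [EuclideanSpace.norm_eq, Real.sqrt_le_left (by positivity)]
  simp only [gridPoint, Real.norm_eq_abs, sq_abs, Fin.sum_univ_two, Fin.isValue,
    Matrix.cons_val_zero, Matrix.cons_val_one, Matrix.cons_val_fin_one]
  nlinarith [mul_nonneg (mul_nonneg hs hs)
    (mul_nonneg (Nat.cast_nonneg (α := ℝ) q.1) (Nat.cast_nonneg (α := ℝ) q.2))]

theorem le_norm_gridPoint_sub {s : ℝ} (hs : 0 ≤ s) {q q' : ℕ × ℕ} (h : q ≠ q') :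
    s ≤ ‖gridPoint s q - gridPoint s q'‖ := by
  have key {a a' : ℕ} (h : a ≠ a') : s ≤ |s * a - s * a'| := by
    have : (1 : ℝ) ≤ |(a : ℝ) - a'| := by
      exact_mod_cast Int.one_le_abs (sub_ne_zero.2 (Int.ofNat_inj.not.2 h))
    rw [← mul_sub, abs_mul, abs_of_nonneg hs]
    nlinarith
  obtain h | h : q.1 ≠ q'.1 ∨ q.2 ≠ q'.2 := by
    by_contra! h'
    exact h (Prod.ext h'.1 h'.2)
  · simpa [gridPoint] using (key h).trans (PiLp.norm_apply_le (gridPoint s q - gridPoint s q') 0)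
  · simpa [gridPoint] using (key h).trans (PiLp.norm_apply_le (gridPoint s q - gridPoint s q') 1)

theorem exists_grid_family {j m : ℕ} (hjm : j ≤ m * m) {s : ℝ} (hs : 0 ≤ s) :
    ∃ p : Fin j → EuclideanSpace ℝ (Fin 2),
      (∀ i, ‖p i‖ ≤ 2 * s * (m - 1)) ∧ Pairwise fun i i' => s ≤ ‖p i - p i'‖ := by
  let q : Fin j → Fin m × Fin m := finProdFinEquiv.symm ∘ Fin.castLE hjm
  have hq : Function.Injective q :=
    finProdFinEquiv.symm.injective.comp (Fin.castLE_injective hjm)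
  refine ⟨fun i => gridPoint s ((q i).1, (q i).2), fun i => ?_, fun i i' hii' => ?_⟩
  · have h₁ : ((q i).1 : ℝ) ≤ m - 1 := by
      rw [le_sub_iff_add_le]; exact_mod_cast (q i).1.isLt
    have h₂ : ((q i).2 : ℝ) ≤ m - 1 := by
      rw [le_sub_iff_add_le]; exact_mod_cast (q i).2.isLt
    refine (norm_gridPoint_le hs _).trans ?_
    dsimp only
    nlinarith
  · refine le_norm_gridPoint_sub hs fun h => hii' (hq ?_)
    simp only [Prod.mk.injEq] at h
    exact Prod.ext (Fin.ext h.1) (Fin.ext h.2)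

section SpinningPairs

variable {E : Type*} [NormedAddCommGroup E] [NormedSpace ℝ E] {j : ℕ}

def pairIndex (k : Fin (2 * j)) : Fin j := ⟨k.val / 2, by omega⟩

def spinPairs (r : ℝ) (p : Fin j → E) (θ : Fin j → sphere (0 : E) 1) (k : Fin (2 * j)) : E :=
  p (pairIndex k) + (if k.val % 2 = 0 then -r else r) • (θ (pairIndex k) : E)

theorem continuous_spinPairs (r : ℝ) (p : Fin j → E) : Continuous (spinPairs r p) := by
  unfold spinPairs
  fun_prop

theorem spinPairs_succ_sub (r : ℝ) (p : Fin j → E) (θ : Fin j → sphere (0 : E) 1) (i : Fin j) :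
    spinPairs r p θ ⟨2 * i.val + 1, by omega⟩ - spinPairs r p θ ⟨2 * i.val, by omega⟩ =
      (2 * r) • (θ i : E) := by
  have h₁ : pairIndex (⟨2 * i.val + 1, by omega⟩ : Fin (2 * j)) = i :=
    Fin.ext (by simp [pairIndex]; omega)
  have h₀ : pairIndex (⟨2 * i.val, by omega⟩ : Fin (2 * j)) = i := Fin.ext (by simp [pairIndex])
  simp [spinPairs, h₀, h₁]
  module

variable {r : ℝ} (p : Fin j → E) (θ : Fin j → sphere (0 : E) 1)

theorem norm_spinPairs_sub_center (hr : 0 ≤ r) (k : Fin (2 * j)) :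
    ‖spinPairs r p θ k - p (pairIndex k)‖ = r := by
  rw [spinPairs, add_sub_cancel_left, norm_smul, norm_eq_of_mem_sphere, mul_one]
  split_ifs <;> simp [abs_of_nonneg hr]

theorem norm_spinPairs_le (hr : 0 ≤ r) (k : Fin (2 * j)) :
    ‖spinPairs r p θ k‖ ≤ ‖p (pairIndex k)‖ + r := by
  simpa [norm_spinPairs_sub_center p θ hr k] using
    norm_le_norm_add_norm_sub' (spinPairs r p θ k) (p (pairIndex k))

theorem two_mul_le_norm_spinPairs_sub (hr : 0 ≤ r)
    (hp : Pairwise fun i i' => 4 * r ≤ ‖p i - p i'‖) {k l : Fin (2 * j)} (hkl : k ≠ l) :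
    2 * r ≤ ‖spinPairs r p θ k - spinPairs r p θ l‖ := by
  by_cases hkl' : pairIndex k = pairIndex l
  · have hpair (i : Fin j) : ‖spinPairs r p θ ⟨2 * i.val + 1, by omega⟩ -
        spinPairs r p θ ⟨2 * i.val, by omega⟩‖ = 2 * r := by
      rw [spinPairs_succ_sub, norm_smul, norm_eq_of_mem_sphere, mul_one,
        Real.norm_of_nonneg (by linarith)]
    obtain ⟨i, hk, hl⟩ : ∃ i : Fin j, k.val / 2 = i.val ∧ l.val / 2 = i.val :=
      ⟨pairIndex k, rfl, congrArg Fin.val hkl'.symm⟩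
    have hkl := Fin.val_ne_of_ne hkl
    rcases Nat.mod_two_eq_zero_or_one k.val with hk2 | hk2
    · have ek : k = ⟨2 * i.val, by omega⟩ := Fin.ext (by simp; omega)
      have el : l = ⟨2 * i.val + 1, by omega⟩ := Fin.ext (by simp at hkl ⊢; omega)
      simp only [ek, el]
      rw [norm_sub_rev, hpair]
    · have ek : k = ⟨2 * i.val + 1, by omega⟩ := Fin.ext (by simp; omega)
      have el : l = ⟨2 * i.val, by omega⟩ := Fin.ext (by simp at hkl ⊢; omega)
      simp only [ek, el, hpair, le_refl]
  · have hk := norm_spinPairs_sub_center p θ hr k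
    have hl := norm_spinPairs_sub_center p θ hr l
    rw [← dist_eq_norm] at hk hl ⊢
    have := dist_triangle4 (p (pairIndex k)) (spinPairs r p θ k) (spinPairs r p θ l)
      (p (pairIndex l))
    rw [dist_comm (p (pairIndex k)) (spinPairs r p θ k), hk, hl, dist_eq_norm] at this
    linarith [hp hkl']

end SpinningPairs

end

/-- For some c > 0 and all j, for any radius r ≤ c/√j, j pairs of disks of radius r can
spin independently inside the closed unit disk: there is a continuous choice of the 2j
centers as a function of the j angles such that the disks form a valid configuration and
the direction from the (2i−1)st to the 2i-th disk is the i-th angle. -/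
theorem disk_pairs_spin_independently :
    ∃ c : ℝ, 0 < c ∧ ∀ j : ℕ, 1 ≤ j → ∀ r : ℝ, 0 < r → r ≤ c / Real.sqrt j →
      ∃ f : (Fin j → Metric.sphere (0 : EuclideanSpace ℝ (Fin 2)) 1) →
            (Fin (2 * j) → EuclideanSpace ℝ (Fin 2)),
        Continuous f ∧
        ∀ θ : Fin j → Metric.sphere (0 : EuclideanSpace ℝ (Fin 2)) 1,
          (∀ k : Fin (2 * j), ‖f θ k‖ ≤ 1 - r) ∧
          (∀ k l : Fin (2 * j), k ≠ l → 2 * r ≤ ‖f θ k - f θ l‖) ∧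
          (∀ i : Fin j,
            f θ ⟨2 * i.val + 1, by have := i.isLt; omega⟩ -
              f θ ⟨2 * i.val, by have := i.isLt; omega⟩ =
            (2 * r) • (θ i : EuclideanSpace ℝ (Fin 2))) := by
  refine ⟨1 / 16, by norm_num, fun j hj r hr hrj => ?_⟩
  have hsqrt : 1 ≤ √(j : ℝ) := Real.one_le_sqrt.2 (by exact_mod_cast hj)
  have hrsqrt : r * √(j : ℝ) ≤ 1 / 16 := (le_div_iff₀ (by positivity)).1 hrj
  set m := ⌈√(j : ℝ)⌉₊
  have hjm : j ≤ m * m := by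
    have := Nat.le_ceil √(j : ℝ)
    have : (j : ℝ) ≤ m * m := by
      rw [← Real.mul_self_sqrt (Nat.cast_nonneg j)]
      exact mul_le_mul this this (by positivity) (by positivity)
    exact_mod_cast this
  obtain ⟨p, hp, hsep⟩ := exists_grid_family hjm (s := 4 * r) (by positivity)
  have hp' (i : Fin j) : ‖p i‖ ≤ 1 - 2 * r := by
    have := Nat.ceil_lt_add_one (Real.sqrt_nonneg (j : ℝ))
    nlinarith [hp i]
  refine ⟨spinPairs r p, continuous_spinPairs r p, fun θ => ⟨fun k => ?_,
    fun k l hkl => two_mul_le_norm_spinPairs_sub p θ hr.le hsep hkl, spinPairs_succ_sub r p θ⟩⟩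
  linarith [norm_spinPairs_le p θ hr.le k, hp' (pairIndex k)]
end

section
/- Let r = 1/3. There exist points x₃, x₄ ∈ ℝ² and a continuous map g : S¹ → ℝ² × ℝ² such that for every θ ∈ S¹: writing (x₁, x₂) = g(θ), the four points x₁, x₂, x₃, x₄ satisfy ‖x_k‖ ≤ 1 − r = 2/3 for all k and ‖x_k − x_l‖ ≥ 2r = 2/3 for all k ≠ l, and the unit vector (x₂ − x₁)/‖x₂ − x₁‖ equals θ. (Two disks of radius 1/3 can turn around each other inside the unit disk through every angle θ while the other two disks remain fixed.) -/
noncomputable section TwoDisksAux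

private def v2 (a b : ℝ) : EuclideanSpace ℝ (Fin 2) :=
  (EuclideanSpace.equiv (Fin 2) ℝ).symm ![a, b]

private lemma norm_v2 (a b : ℝ) : ‖v2 a b‖ = Real.sqrt (a ^ 2 + b ^ 2) := by
  rw [EuclideanSpace.norm_eq]
  simp [v2, Fin.sum_univ_two, Real.norm_eq_abs, sq_abs]

private lemma v2_sub (a b c d : ℝ) : v2 a b - v2 c d = v2 (a - c) (b - d) := by
  unfold v2
  rw [← map_sub]
  congr 1
  funext i
  fin_cases i <;> simp

private lemma v2_smul (c a b : ℝ) : c • v2 a b = v2 (c * a) (c * b) := by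
  unfold v2
  rw [← map_smul]
  congr 1
  funext i
  fin_cases i <;> simp

private lemma v2_eta (x : EuclideanSpace ℝ (Fin 2)) : v2 (x 0) (x 1) = x := by
  ext i
  fin_cases i <;> rfl

private lemma norm_v2_le {a b c : ℝ} (hc : 0 ≤ c) (h : a ^ 2 + b ^ 2 ≤ c ^ 2) :
    ‖v2 a b‖ ≤ c := by
  rw [norm_v2]
  calc Real.sqrt (a ^ 2 + b ^ 2) ≤ Real.sqrt (c ^ 2) := Real.sqrt_le_sqrt h
  _ = c := Real.sqrt_sq hc

private lemma le_norm_v2 {a b c : ℝ} (hc : 0 ≤ c) (h : c ^ 2 ≤ a ^ 2 + b ^ 2) :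
    c ≤ ‖v2 a b‖ := by
  rw [norm_v2]
  calc c = Real.sqrt (c ^ 2) := (Real.sqrt_sq hc).symm
  _ ≤ Real.sqrt (a ^ 2 + b ^ 2) := Real.sqrt_le_sqrt h

private def k1 (a b : ℝ) : ℝ :=
  (max (Real.sqrt 3 * b - a) 0 - max (a + Real.sqrt 3 * b) 0) / 3

private def k2 (a b : ℝ) : ℝ :=
  -Real.sqrt 3 * (max (a + Real.sqrt 3 * b) 0 + max (Real.sqrt 3 * b - a) 0) / 9

private lemma sq3 : Real.sqrt 3 ^ 2 = 3 := Real.sq_sqrt (by norm_num)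

section Scalar

variable {a b : ℝ}

-- ‖p₁‖ ≤ 2/3
private lemma ineq1 (hab : a ^ 2 + b ^ 2 = 1) : k1 a b ^ 2 + k2 a b ^ 2 ≤ (2 / 3 : ℝ) ^ 2 := by
  unfold k1 k2
  have hs : Real.sqrt 3 ^ 2 = 3 := sq3
  set s := Real.sqrt 3 with hsdef
  rw [show (-s * (max (a + s * b) 0 + max (s * b - a) 0) / 9) ^ 2
      = 3 * ((max (a + s * b) 0 + max (s * b - a) 0) / 9) ^ 2 by
    linear_combination ((max (a + s * b) 0 + max (s * b - a) 0) ^ 2 / 81) * hs]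
  set c := s * b with hc
  have h3 : 3 * a ^ 2 + c ^ 2 = 3 := by rw [hc]; linear_combination 3 * hab + b ^ 2 * hs
  rcases le_total (a + c) 0 with hP | hP <;> rcases le_total (c - a) 0 with hQ | hQ
  · rw [max_eq_right hP, max_eq_right hQ]; nlinarith [h3]
  · rw [max_eq_right hP, max_eq_left hQ]
    nlinarith [h3, mul_nonneg (by linarith : (0:ℝ) ≤ -a) (by linarith : (0:ℝ) ≤ -(a + c))]
  · rw [max_eq_left hP, max_eq_right hQ]
    nlinarith [h3, mul_nonneg (by linarith : (0:ℝ) ≤ a) (by linarith : (0:ℝ) ≤ a - c)]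
  · rw [max_eq_left hP, max_eq_left hQ]; nlinarith [h3]

-- ‖p₂‖ ≤ 2/3
private lemma ineq2 (hab : a ^ 2 + b ^ 2 = 1) :
    (k1 a b + 2 / 3 * a) ^ 2 + (k2 a b + 2 / 3 * b) ^ 2 ≤ (2 / 3 : ℝ) ^ 2 := by
  unfold k1 k2
  have hs : Real.sqrt 3 ^ 2 = 3 := sq3
  set s := Real.sqrt 3 with hsdef
  rw [show (-s * (max (a + s * b) 0 + max (s * b - a) 0) / 9 + 2 / 3 * b) ^ 2
      = 3 * ((max (a + s * b) 0 + max (s * b - a) 0) / 9 - 2 * (s * b) / 9) ^ 2 by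
    linear_combination ((max (a + s * b) 0 + max (s * b - a) 0) ^ 2 / 81 - 4 * b ^ 2 / 27) * hs]
  set c := s * b with hc
  have h3 : 3 * a ^ 2 + c ^ 2 = 3 := by rw [hc]; linear_combination 3 * hab + b ^ 2 * hs
  rcases le_total (a + c) 0 with hP | hP <;> rcases le_total (c - a) 0 with hQ | hQ
  · rw [max_eq_right hP, max_eq_right hQ]; nlinarith [h3]
  · rw [max_eq_right hP, max_eq_left hQ]
    nlinarith [h3, mul_nonneg (by linarith : (0:ℝ) ≤ -a) (by linarith : (0:ℝ) ≤ c - a)]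
  · rw [max_eq_left hP, max_eq_right hQ]
    nlinarith [h3, mul_nonneg (by linarith : (0:ℝ) ≤ a) (by linarith : (0:ℝ) ≤ a + c)]
  · rw [max_eq_left hP, max_eq_left hQ]; nlinarith [h3]

-- ‖p₁ - x₃‖ ≥ 2/3
private lemma ineq3 (hab : a ^ 2 + b ^ 2 = 1) :
    (2 / 3 : ℝ) ^ 2 ≤ (k1 a b - 1 / 3) ^ 2 + (k2 a b - Real.sqrt 3 / 3) ^ 2 := by
  unfold k1 k2
  have hs : Real.sqrt 3 ^ 2 = 3 := sq3
  set s := Real.sqrt 3 with hsdef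
  rw [show (-s * (max (a + s * b) 0 + max (s * b - a) 0) / 9 - s / 3) ^ 2
      = 3 * ((max (a + s * b) 0 + max (s * b - a) 0) / 9 + 1 / 3) ^ 2 by
    linear_combination (((max (a + s * b) 0 + max (s * b - a) 0) / 9 + 1 / 3) ^ 2) * hs]
  set c := s * b with hc
  have h3 : 3 * a ^ 2 + c ^ 2 = 3 := by rw [hc]; linear_combination 3 * hab + b ^ 2 * hs
  rcases le_total (a + c) 0 with hP | hP <;> rcases le_total (c - a) 0 with hQ | hQ
  · rw [max_eq_right hP, max_eq_right hQ]; nlinarith [h3]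
  · rw [max_eq_right hP, max_eq_left hQ]; nlinarith [h3, sq_nonneg (c - a)]
  · rw [max_eq_left hP, max_eq_right hQ]; nlinarith [h3, hP]
  · rw [max_eq_left hP, max_eq_left hQ]; nlinarith [h3, hP, hQ]

-- ‖p₁ - x₄‖ ≥ 2/3
private lemma ineq4 (hab : a ^ 2 + b ^ 2 = 1) :
    (2 / 3 : ℝ) ^ 2 ≤ (k1 a b + 1 / 3) ^ 2 + (k2 a b - Real.sqrt 3 / 3) ^ 2 := by
  unfold k1 k2
  have hs : Real.sqrt 3 ^ 2 = 3 := sq3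
  set s := Real.sqrt 3 with hsdef
  rw [show (-s * (max (a + s * b) 0 + max (s * b - a) 0) / 9 - s / 3) ^ 2
      = 3 * ((max (a + s * b) 0 + max (s * b - a) 0) / 9 + 1 / 3) ^ 2 by
    linear_combination (((max (a + s * b) 0 + max (s * b - a) 0) / 9 + 1 / 3) ^ 2) * hs]
  set c := s * b with hc
  have h3 : 3 * a ^ 2 + c ^ 2 = 3 := by rw [hc]; linear_combination 3 * hab + b ^ 2 * hs
  rcases le_total (a + c) 0 with hP | hP <;> rcases le_total (c - a) 0 with hQ | hQ
  · rw [max_eq_right hP, max_eq_right hQ]; nlinarith [h3]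
  · rw [max_eq_right hP, max_eq_left hQ]; nlinarith [h3, hQ]
  · rw [max_eq_left hP, max_eq_right hQ]; nlinarith [h3, sq_nonneg (a + c)]
  · rw [max_eq_left hP, max_eq_left hQ]; nlinarith [h3, hP, hQ]

-- ‖p₂ - x₃‖ ≥ 2/3
private lemma ineq5 (hab : a ^ 2 + b ^ 2 = 1) :
    (2 / 3 : ℝ) ^ 2 ≤ (k1 a b + 2 / 3 * a - 1 / 3) ^ 2
      + (k2 a b + 2 / 3 * b - Real.sqrt 3 / 3) ^ 2 := by
  unfold k1 k2
  have hs : Real.sqrt 3 ^ 2 = 3 := sq3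
  set s := Real.sqrt 3 with hsdef
  rw [show (-s * (max (a + s * b) 0 + max (s * b - a) 0) / 9 + 2 / 3 * b - s / 3) ^ 2
      = 3 * ((max (a + s * b) 0 + max (s * b - a) 0) / 9 - 2 * (s * b) / 9 + 1 / 3) ^ 2 by
    linear_combination ((max (a + s * b) 0 + max (s * b - a) 0 + 3) ^ 2 / 81 - 4 * b ^ 2 / 27) * hs]
  set c := s * b with hc
  have h3 : 3 * a ^ 2 + c ^ 2 = 3 := by rw [hc]; linear_combination 3 * hab + b ^ 2 * hs
  rcases le_total (a + c) 0 with hP | hP <;> rcases le_total (c - a) 0 with hQ | hQ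
  · rw [max_eq_right hP, max_eq_right hQ]; nlinarith [h3, hP]
  · rw [max_eq_right hP, max_eq_left hQ]; nlinarith [h3, hP, sq_nonneg (a + c)]
  · rw [max_eq_left hP, max_eq_right hQ]; nlinarith [h3, sq_nonneg (a - c)]
  · rw [max_eq_left hP, max_eq_left hQ]; nlinarith [h3, hP, hQ]

-- ‖p₂ - x₄‖ ≥ 2/3
private lemma ineq6 (hab : a ^ 2 + b ^ 2 = 1) :
    (2 / 3 : ℝ) ^ 2 ≤ (k1 a b + 2 / 3 * a + 1 / 3) ^ 2
      + (k2 a b + 2 / 3 * b - Real.sqrt 3 / 3) ^ 2 := by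
  unfold k1 k2
  have hs : Real.sqrt 3 ^ 2 = 3 := sq3
  set s := Real.sqrt 3 with hsdef
  rw [show (-s * (max (a + s * b) 0 + max (s * b - a) 0) / 9 + 2 / 3 * b - s / 3) ^ 2
      = 3 * ((max (a + s * b) 0 + max (s * b - a) 0) / 9 - 2 * (s * b) / 9 + 1 / 3) ^ 2 by
    linear_combination ((max (a + s * b) 0 + max (s * b - a) 0 + 3) ^ 2 / 81 - 4 * b ^ 2 / 27) * hs]
  set c := s * b with hc
  have h3 : 3 * a ^ 2 + c ^ 2 = 3 := by rw [hc]; linear_combination 3 * hab + b ^ 2 * hs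
  rcases le_total (a + c) 0 with hP | hP <;> rcases le_total (c - a) 0 with hQ | hQ
  · rw [max_eq_right hP, max_eq_right hQ]; nlinarith [h3, hQ]
  · rw [max_eq_right hP, max_eq_left hQ]; nlinarith [h3, sq_nonneg (a + c)]
  · rw [max_eq_left hP, max_eq_right hQ]; nlinarith [h3, hQ, sq_nonneg (a - c)]
  · rw [max_eq_left hP, max_eq_left hQ]; nlinarith [h3, hP, hQ]

end Scalar

private def gp (x : EuclideanSpace ℝ (Fin 2)) :
    EuclideanSpace ℝ (Fin 2) × EuclideanSpace ℝ (Fin 2) :=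
  (v2 (k1 (x 0) (x 1)) (k2 (x 0) (x 1)),
   v2 (k1 (x 0) (x 1) + 2 / 3 * x 0) (k2 (x 0) (x 1) + 2 / 3 * x 1))

private lemma gp_continuous : Continuous gp := by
  have c0 : Continuous fun x : EuclideanSpace ℝ (Fin 2) => x 0 :=
    (continuous_apply (0 : Fin 2)).comp (EuclideanSpace.equiv (Fin 2) ℝ).continuous
  have c1 : Continuous fun x : EuclideanSpace ℝ (Fin 2) => x 1 :=
    (continuous_apply (1 : Fin 2)).comp (EuclideanSpace.equiv (Fin 2) ℝ).continuous
  have ck1 : Continuous fun x : EuclideanSpace ℝ (Fin 2) => k1 (x 0) (x 1) := by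
    unfold k1
    exact (((continuous_const.mul c1).sub c0).max continuous_const).sub
      ((c0.add (continuous_const.mul c1)).max continuous_const) |>.div_const 3
  have ck2 : Continuous fun x : EuclideanSpace ℝ (Fin 2) => k2 (x 0) (x 1) := by
    unfold k2
    exact (continuous_const.mul (((c0.add (continuous_const.mul c1)).max continuous_const).add
      (((continuous_const.mul c1).sub c0).max continuous_const))).div_const 9
  have cv2 : ∀ {f g : EuclideanSpace ℝ (Fin 2) → ℝ}, Continuous f → Continuous g →
      Continuous fun x => v2 (f x) (g x) := by
    intro f g hf hg
    unfold v2
    apply (ContinuousLinearEquiv.continuous _).comp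
    apply continuous_pi
    intro i
    fin_cases i <;> simpa
  exact (cv2 ck1 ck2).prodMk (cv2 (ck1.add (continuous_const.mul c0))
    (ck2.add (continuous_const.mul c1)))

end TwoDisksAux

/-- Two disks of radius 1/3 can turn around each other through every angle inside the
unit disk while two further disks of radius 1/3 remain fixed: there exist fixed centers
x₃, x₄ and a continuous map g from the circle such that for every direction θ the four
centers (g θ).1, (g θ).2, x₃, x₄ form a configuration of four disjoint disks of radius
1/3 in the closed unit disk, and the unit vector from the first center to the second
is θ. -/
theorem two_disks_turn_around_each_other :
    ∃ (x₃ x₄ : EuclideanSpace ℝ (Fin 2))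
      (g : Metric.sphere (0 : EuclideanSpace ℝ (Fin 2)) 1 →
           EuclideanSpace ℝ (Fin 2) × EuclideanSpace ℝ (Fin 2)),
      Continuous g ∧
      ∀ θ : Metric.sphere (0 : EuclideanSpace ℝ (Fin 2)) 1,
        ‖(g θ).1‖ ≤ 2 / 3 ∧ ‖(g θ).2‖ ≤ 2 / 3 ∧ ‖x₃‖ ≤ 2 / 3 ∧ ‖x₄‖ ≤ 2 / 3 ∧
        (2 / 3 : ℝ) ≤ ‖(g θ).1 - (g θ).2‖ ∧
        (2 / 3 : ℝ) ≤ ‖(g θ).1 - x₃‖ ∧ (2 / 3 : ℝ) ≤ ‖(g θ).1 - x₄‖ ∧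
        (2 / 3 : ℝ) ≤ ‖(g θ).2 - x₃‖ ∧ (2 / 3 : ℝ) ≤ ‖(g θ).2 - x₄‖ ∧
        (2 / 3 : ℝ) ≤ ‖x₃ - x₄‖ ∧
        ‖(g θ).2 - (g θ).1‖⁻¹ • ((g θ).2 - (g θ).1) =
          (θ : EuclideanSpace ℝ (Fin 2)) := by
  refine ⟨v2 (1 / 3) (Real.sqrt 3 / 3), v2 (-(1 / 3)) (Real.sqrt 3 / 3),
    fun θ => gp θ.val, gp_continuous.comp continuous_subtype_val, ?_⟩
  intro θ
  have hθn : ‖(θ : EuclideanSpace ℝ (Fin 2))‖ = 1 := by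
    simpa using mem_sphere_zero_iff_norm.mp θ.2
  set a : ℝ := (θ : EuclideanSpace ℝ (Fin 2)) 0 with ha
  set b : ℝ := (θ : EuclideanSpace ℝ (Fin 2)) 1 with hb
  have hθeta : (θ : EuclideanSpace ℝ (Fin 2)) = v2 a b := (v2_eta _).symm
  have hab : a ^ 2 + b ^ 2 = 1 := by
    rw [hθeta, norm_v2] at hθn
    nlinarith [Real.sq_sqrt (by positivity : (0:ℝ) ≤ a ^ 2 + b ^ 2), hθn]
  have hg1 : (gp θ.val).1 = v2 (k1 a b) (k2 a b) := rfl
  have hg2 : (gp θ.val).2 = v2 (k1 a b + 2 / 3 * a) (k2 a b + 2 / 3 * b) := rfl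
  have hs : Real.sqrt 3 ^ 2 = 3 := sq3
  refine ⟨?_, ?_, ?_, ?_, ?_, ?_, ?_, ?_, ?_, ?_, ?_⟩
  · rw [hg1]; exact norm_v2_le (by norm_num) (ineq1 hab)
  · rw [hg2]; exact norm_v2_le (by norm_num) (ineq2 hab)
  · exact norm_v2_le (by norm_num) (by nlinarith [hs])
  · exact norm_v2_le (by norm_num) (by nlinarith [hs])
  · rw [hg1, hg2, v2_sub]
    exact le_norm_v2 (by norm_num) (by nlinarith [hab])
  · rw [hg1, v2_sub]
    exact le_norm_v2 (by norm_num) (by nlinarith [ineq3 hab])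
  · rw [hg1, v2_sub]
    exact le_norm_v2 (by norm_num) (by nlinarith [ineq4 hab])
  · rw [hg2, v2_sub]
    exact le_norm_v2 (by norm_num) (by nlinarith [ineq5 hab])
  · rw [hg2, v2_sub]
    exact le_norm_v2 (by norm_num) (by nlinarith [ineq6 hab])
  · rw [v2_sub]
    exact le_norm_v2 (by norm_num) (by nlinarith [hs])
  · have hdiff : (gp θ.val).2 - (gp θ.val).1 = v2 (2 / 3 * a) (2 / 3 * b) := by
      rw [hg1, hg2, v2_sub]
      congr 1 <;> ring
    have hn : ‖v2 (2 / 3 * a) (2 / 3 * b)‖ = 2 / 3 := by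
      rw [norm_v2, show (2 / 3 * a) ^ 2 + (2 / 3 * b) ^ 2 = (2 / 3) ^ 2 by
        linear_combination (4 / 9 : ℝ) * hab]
      exact Real.sqrt_sq (by norm_num)
    rw [hdiff, hn, v2_smul, hθeta]
    congr 1 <;> ring
end

section
/- Let U = {(x, y) ∈ ℝ² : |y| < 1} be the open horizontal strip of height 2, and let r > 1 and δ > 0. Then there exists a set S ⊆ U that is closed and discrete as a subset of ℝ² (a locally finite set of points) with the following property. Suppose (p, q) : [0, 1] → ℝ² × ℝ² is a continuous path such that for every t ∈ [0, 1], ‖p(t) − q(t)‖ = r and the closed segment from p(t) to q(t) is contained in U \ S. If the initial segment is vertical, i.e., p(0) and q(0) have the same first coordinate c, then for every t ∈ [0, 1], every point z on the closed segment from p(t) to q(t) has first coordinate satisfying |z₁ − c| ≤ δ/2. (Any vertical segment of length r confined to U \ S must stay in the vertical strip of width δ centered on the segment.) -/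
/-!
Remove the grid `S = εℤ × {h, -h}`, with `h` small and `ε = h μ`. A segment of length
`r > μ + 1 + h` in the strip whose horizontal extent is at most `μ` is steep, so it crosses both
lines `y = ±h`. If both crossings lie in one grid cell `[k ε, (k + 1) ε]`, they are at most `ε`
apart horizontally while `2 h` apart vertically, which bounds the horizontal extent by `ε / h = μ`
again. Hence "both crossings lie in the cell of `c`" is a closed condition that persists under
small motions avoiding `S`, since a crossing can only leave the cell through a point of `S`;
continuous induction along the path keeps it true from the initial vertical position on.
-/

open Set Filter Topology

local notation "ℝ²" => EuclideanSpace ℝ (Fin 2)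

theorem mapsTo_Icc_of_isClosed_of_mem_nhdsWithin {X : Type*} [TopologicalSpace X] {γ : ℝ → X}
    {A T : Set X} {a b : ℝ} (hγ : ContinuousOn γ (Icc a b)) (hγA : MapsTo γ (Icc a b) A)
    (hT : IsClosed T) (hTA : ∀ x ∈ T ∩ A, T ∈ 𝓝[A] x) (ha : γ a ∈ T) :
    MapsTo γ (Icc a b) T := by
  refine IsClosed.Icc_subset_of_forall_mem_nhdsWithin (s := γ ⁻¹' T) ?_ ha ?_
  · rw [inter_comm]
    exact hγ.preimage_isClosed_of_isClosed isClosed_Icc hT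
  · rintro t ⟨htT, ht⟩
    have ht' : t ∈ Icc a b := Ico_subset_Icc_self ht
    exact nhdsWithin_le_of_mem (Icc_mem_nhdsGT_of_mem ht)
      ((hγ t ht').tendsto_nhdsWithin hγA (hTA _ ⟨htT, hγA ht'⟩))

lemma mem_uIcc_of_le_abs_sub {a b h y : ℝ} (ha : |a| < 1) (hb : |b| < 1)
    (hab : 1 + h ≤ |a - b|) (hy : |y| ≤ h) : y ∈ uIcc a b := by
  rw [abs_lt] at ha hb
  rw [abs_le] at hy
  rw [mem_uIcc]
  rcases abs_cases (a - b) with ⟨hab', -⟩ | ⟨hab', -⟩ <;> rw [hab'] at hab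
  · exact Or.inr ⟨by linarith, by linarith⟩
  · exact Or.inl ⟨by linarith, by linarith⟩

lemma EuclideanSpace.apply_mem_uIcc_of_mem_segment {ι : Type*} [Fintype ι]
    {P Q z : EuclideanSpace ℝ ι} (hz : z ∈ segment ℝ P Q) (i : ι) : z i ∈ uIcc (P i) (Q i) := by
  rw [← segment_eq_uIcc]
  have := image_segment ℝ (EuclideanSpace.proj (𝕜 := ℝ) i).toLinearMap.toAffineMap P Q
  exact this ▸ mem_image_of_mem _ hz

lemma EuclideanSpace.norm_le_abs_add_abs (v : ℝ²) : ‖v‖ ≤ |v 0| + |v 1| := by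
  refine le_of_sq_le_sq ?_ (by positivity)
  rw [EuclideanSpace.real_norm_sq_eq, Fin.sum_univ_two, add_sq, sq_abs, sq_abs]
  nlinarith [abs_nonneg (v 0), abs_nonneg (v 1)]

lemma lt_abs_apply_one_sub {P Q : ℝ²} {r μ b : ℝ} (hPQ : ‖P - Q‖ = r) (hμ : |P 0 - Q 0| ≤ μ)
    (hr : μ + b < r) : b < |P 1 - Q 1| := by
  have := EuclideanSpace.norm_le_abs_add_abs (P - Q)
  simp only [PiLp.sub_apply, hPQ] at this
  linarith

def heightGrid (h ε : ℝ) : Set ℝ² := {z | (z 1 = h ∨ z 1 = -h) ∧ ∃ k : ℤ, z 0 = k * ε}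

section heightGrid

variable {h ε : ℝ}

lemma heightGrid_subset_strip (hh : 0 < h) (hh1 : h < 1) : heightGrid h ε ⊆ {z | |z 1| < 1} := by
  rintro z ⟨hz | hz, -⟩ <;> simp [hz, abs_of_pos hh, hh1]

lemma heightGrid_pairwise_le_dist (hε : 0 < ε) :
    (heightGrid h ε).Pairwise fun z w => min (2 * h) ε ≤ dist z w := by
  rintro z ⟨hz1, k, hz0⟩ w ⟨hw1, l, hw0⟩ hzw
  by_cases h1 : z 1 = w 1
  · have hkl : k ≠ l := by
      rintro rfl
      exact hzw (by ext i; fin_cases i <;> simp [hz0, hw0, h1])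
    have hk : (1 : ℝ) ≤ |(k : ℝ) - l| := by exact_mod_cast Int.one_le_abs (sub_ne_zero.2 hkl)
    calc min (2 * h) ε ≤ ε := min_le_right _ _
      _ ≤ |(k : ℝ) - l| * ε := le_mul_of_one_le_left hε.le hk
      _ = dist (z 0) (w 0) := by rw [Real.dist_eq, hz0, hw0, ← sub_mul, abs_mul, abs_of_pos hε]
      _ ≤ dist z w := PiLp.dist_apply_le z w 0
  · have h2 : 2 * h ≤ |z 1 - w 1| := by
      rcases hz1 with hz1 | hz1 <;> rcases hw1 with hw1 | hw1 <;> rw [hz1, hw1] at h1 ⊢ <;>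
        first | exact absurd rfl h1 | (rw [le_abs]; first | (left; linarith) | (right; linarith))
    calc min (2 * h) ε ≤ 2 * h := min_le_left _ _
      _ ≤ dist (z 1) (w 1) := by rwa [Real.dist_eq]
      _ ≤ dist z w := PiLp.dist_apply_le z w 1

lemma isClosed_heightGrid (hh : 0 < h) (hε : 0 < ε) : IsClosed (heightGrid h ε) :=
  Metric.isClosed_of_pairwise_le_dist (by positivity) (heightGrid_pairwise_le_dist hε)

lemma discreteTopology_heightGrid (hh : 0 < h) (hε : 0 < ε) : DiscreteTopology (heightGrid h ε) :=
  DiscreteTopology.of_forall_le_dist (r := min (2 * h) ε) (by positivity)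
    fun z w hzw => heightGrid_pairwise_le_dist hε z.2 w.2 (Subtype.coe_ne_coe.2 hzw)

end heightGrid

noncomputable def horizontalCrossing (P Q : ℝ²) (y : ℝ) : ℝ² :=
  P + ((y - P 1) / (Q 1 - P 1)) • (Q - P)

section horizontalCrossing

variable {P Q : ℝ²} {y h : ℝ}

@[simp]
lemma horizontalCrossing_apply (i : Fin 2) :
    horizontalCrossing P Q y i = P i + (y - P 1) / (Q 1 - P 1) * (Q i - P i) := by
  simp [horizontalCrossing]

lemma horizontalCrossing_apply_one (hPQ : P 1 ≠ Q 1) : horizontalCrossing P Q y 1 = y := by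
  rw [horizontalCrossing_apply, div_mul_cancel₀ _ (sub_ne_zero.2 hPQ.symm)]
  ring

lemma horizontalCrossing_mem_segment (hPQ : P 1 ≠ Q 1) (hy : y ∈ uIcc (P 1) (Q 1)) :
    horizontalCrossing P Q y ∈ segment ℝ P Q := by
  rw [← segment_eq_uIcc, segment_eq_image'] at hy
  obtain ⟨θ, hθ, hθy⟩ := hy
  have hθ_eq : (y - P 1) / (Q 1 - P 1) = θ := by
    rw [div_eq_iff (sub_ne_zero.2 hPQ.symm), ← hθy]
    simp only [smul_eq_mul]
    ring
  rw [segment_eq_image']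
  exact ⟨θ, hθ, by rw [horizontalCrossing, hθ_eq]⟩

lemma continuousAt_horizontalCrossing {x : ℝ² × ℝ²} (hx : x.1 1 ≠ x.2 1) :
    ContinuousAt (fun x : ℝ² × ℝ² => horizontalCrossing x.1 x.2 y) x := by
  unfold horizontalCrossing
  fun_prop (disch := exact sub_ne_zero.2 hx.symm)

lemma mul_abs_sub_le_abs_horizontalCrossing_sub (hh : 0 ≤ h) (hP : |P 1| < 1) (hQ : |Q 1| < 1)
    (hPQ : P 1 ≠ Q 1) :
    h * |P 0 - Q 0| ≤ |horizontalCrossing P Q h 0 - horizontalCrossing P Q (-h) 0| := by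
  have hΔ : Q 1 - P 1 ≠ 0 := sub_ne_zero.2 hPQ.symm
  have hΔ2 : |Q 1 - P 1| < 2 := by
    rw [abs_lt] at *
    constructor <;> linarith
  have key : horizontalCrossing P Q h 0 - horizontalCrossing P Q (-h) 0 =
      2 * h * (Q 0 - P 0) / (Q 1 - P 1) := by
    simp only [horizontalCrossing_apply]
    field_simp
    ring
  rw [key, abs_div, abs_mul, abs_of_nonneg (by positivity : 0 ≤ 2 * h), abs_sub_comm,
    le_div_iff₀ (abs_pos.2 hΔ)]
  nlinarith [mul_nonneg hh (abs_nonneg (Q 0 - P 0))]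

end horizontalCrossing

def segmentsIn (V : Set ℝ²) (r : ℝ) : Set (ℝ² × ℝ²) :=
  {x | ‖x.1 - x.2‖ = r ∧ segment ℝ x.1 x.2 ⊆ V}

lemma abs_apply_one_lt_of_mem_segmentsIn {V : Set ℝ²} {r : ℝ} {x : ℝ² × ℝ²}
    (hV : V ⊆ {z | |z 1| < 1}) (hx : x ∈ segmentsIn V r) : |x.1 1| < 1 ∧ |x.2 1| < 1 :=
  ⟨hV (hx.2 (left_mem_segment ℝ _ _)), hV (hx.2 (right_mem_segment ℝ _ _))⟩

def trappedSegments (r h μ a b : ℝ) : Set (ℝ² × ℝ²) :=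
  {x | ‖x.1 - x.2‖ = r ∧ |x.1 0 - x.2 0| ≤ μ ∧
    horizontalCrossing x.1 x.2 h 0 ∈ Icc a b ∧ horizontalCrossing x.1 x.2 (-h) 0 ∈ Icc a b}

section trappedSegments

variable {r h μ a b : ℝ} {x : ℝ² × ℝ²}

lemma lt_abs_sub_of_mem_trappedSegments {s : ℝ} (hx : x ∈ trappedSegments r h μ a b)
    (hr : μ + s < r) : s < |x.1 1 - x.2 1| :=
  lt_abs_apply_one_sub hx.1 hx.2.1 hr

lemma isClosed_trappedSegments (hμr : μ < r) : IsClosed (trappedSegments r h μ a b) := by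
  let A := {x : ℝ² × ℝ² | ‖x.1 - x.2‖ = r ∧ |x.1 0 - x.2 0| ≤ μ}
  have hA : IsClosed A :=
    (isClosed_eq (f := fun x : ℝ² × ℝ² => ‖x.1 - x.2‖) (by fun_prop) continuous_const).inter
      (isClosed_le (f := fun x : ℝ² × ℝ² => |x.1 0 - x.2 0|) (by fun_prop) continuous_const)
  have hX : ContinuousOn (fun x : ℝ² × ℝ² =>
      (horizontalCrossing x.1 x.2 h 0, horizontalCrossing x.1 x.2 (-h) 0)) A := by
    intro x hx
    have hne : x.1 1 ≠ x.2 1 := by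
      have := lt_abs_apply_one_sub hx.1 hx.2 (b := 0) (by linarith)
      exact sub_ne_zero.1 (abs_pos.1 this)
    refine ContinuousAt.continuousWithinAt (ContinuousAt.prodMk ?_ ?_) <;>
      exact (PiLp.continuous_apply 2 _ 0).continuousAt.comp (continuousAt_horizontalCrossing hne)
  convert hX.preimage_isClosed_of_isClosed hA
    ((isClosed_Icc (a := a) (b := b)).prod (isClosed_Icc (a := a) (b := b))) using 1
  ext x
  simp only [trappedSegments, A, mem_inter_iff, mem_preimage, mem_prod, mem_ofPred_eq, and_assoc]

lemma mem_trappedSegments_of_vertical {c : ℝ} (hx : ‖x.1 - x.2‖ = r) (hx1 : x.1 0 = c)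
    (hx2 : x.2 0 = c) (hμ : 0 ≤ μ) (hc : c ∈ Icc a b) : x ∈ trappedSegments r h μ a b := by
  refine ⟨hx, by simpa [hx1, hx2] using hμ, ?_, ?_⟩ <;> simpa [hx1, hx2] using hc

lemma mem_trappedSegments_of_crossings_mem_Icc {V : Set ℝ²} (hV : V ⊆ {z | |z 1| < 1})
    (hh : 0 < h) (hab : b - a ≤ h * μ) (hx : x ∈ segmentsIn V r) (hne : x.1 1 ≠ x.2 1)
    (hX : horizontalCrossing x.1 x.2 h 0 ∈ Icc a b)
    (hX' : horizontalCrossing x.1 x.2 (-h) 0 ∈ Icc a b) : x ∈ trappedSegments r h μ a b := by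
  obtain ⟨h1, h2⟩ := abs_apply_one_lt_of_mem_segmentsIn hV hx
  have hμ : h * |x.1 0 - x.2 0| ≤ h * μ :=
    calc h * |x.1 0 - x.2 0|
        ≤ |horizontalCrossing x.1 x.2 h 0 - horizontalCrossing x.1 x.2 (-h) 0| :=
          mul_abs_sub_le_abs_horizontalCrossing_sub hh.le h1 h2 hne
      _ ≤ b - a := by rw [← Real.dist_eq]; exact Real.dist_le_of_mem_Icc hX hX'
      _ ≤ h * μ := hab
  exact ⟨hx.1, le_of_mul_le_mul_left hμ hh, hX, hX'⟩

end trappedSegments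

lemma trappedSegments_mem_nhdsWithin {r h ε μ : ℝ} {k : ℤ} {x : ℝ² × ℝ²} (hh : 0 < h)
    (hε : ε ≤ h * μ) (hr : μ + (1 + h) < r)
    (hx : x ∈ trappedSegments r h μ (k * ε) ((k + 1) * ε))
    (hxV : x ∈ segmentsIn ({z | |z 1| < 1} \ heightGrid h ε) r) :
    trappedSegments r h μ (k * ε) ((k + 1) * ε) ∈
      𝓝[segmentsIn ({z | |z 1| < 1} \ heightGrid h ε) r] x := by
  have hV : {z : ℝ² | |z 1| < 1} \ heightGrid h ε ⊆ {z | |z 1| < 1} := sdiff_subset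
  obtain ⟨h1, h2⟩ := abs_apply_one_lt_of_mem_segmentsIn hV hxV
  have hsteep := lt_abs_sub_of_mem_trappedSegments hx hr
  have hne : x.1 1 ≠ x.2 1 := sub_ne_zero.1 (abs_pos.1 (by linarith))
  -- A crossing at height `±h` lies on the segment, hence misses the grid points `k ε, (k + 1) ε`.
  have hIoo : ∀ y, (y = h ∨ y = -h) → horizontalCrossing x.1 x.2 y 0 ∈ Icc (k * ε) ((k + 1) * ε) →
      horizontalCrossing x.1 x.2 y 0 ∈ Ioo (k * ε) ((k + 1) * ε) := by
    intro y hy hX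
    have hy' : |y| ≤ h := by rcases hy with rfl | rfl <;> simp [abs_of_pos hh]
    have hnot : horizontalCrossing x.1 x.2 y ∉ heightGrid h ε :=
      (hxV.2 (horizontalCrossing_mem_segment hne (mem_uIcc_of_le_abs_sub h1 h2 hsteep.le hy'))).2
    rw [← horizontalCrossing_apply_one (y := y) hne] at hy
    exact ⟨hX.1.lt_of_ne fun hk => hnot ⟨hy, k, hk.symm⟩,
      hX.2.lt_of_ne fun hk => hnot ⟨hy, k + 1, by push_cast; exact hk⟩⟩
  have hcont (y : ℝ) : ContinuousAt (fun x : ℝ² × ℝ² => horizontalCrossing x.1 x.2 y 0) x :=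
    (PiLp.continuous_apply 2 _ 0).continuousAt.comp (continuousAt_horizontalCrossing hne)
  have hev : ∀ᶠ x' in 𝓝 x, x'.1 1 ≠ x'.2 1 ∧
      horizontalCrossing x'.1 x'.2 h 0 ∈ Ioo (k * ε) ((k + 1) * ε) ∧
      horizontalCrossing x'.1 x'.2 (-h) 0 ∈ Ioo (k * ε) ((k + 1) * ε) :=
    ((isOpen_ne_fun (f := fun x : ℝ² × ℝ² => x.1 1) (g := fun x => x.2 1) (by fun_prop)
      (by fun_prop)).eventually_mem hne).and <|
      ((hcont h).eventually (isOpen_Ioo.mem_nhds (hIoo h (Or.inl rfl) hx.2.2.1))).and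
      ((hcont (-h)).eventually (isOpen_Ioo.mem_nhds (hIoo (-h) (Or.inr rfl) hx.2.2.2)))
  filter_upwards [nhdsWithin_le_nhds hev, self_mem_nhdsWithin] with x' ⟨hne', hX, hX'⟩ hx'
  exact mem_trappedSegments_of_crossings_mem_Icc hV hh (by linarith) hx' hne'
    (Ioo_subset_Icc_self hX) (Ioo_subset_Icc_self hX')

lemma abs_sub_le_of_mem_trappedSegments {V : Set ℝ²} {r h μ a b c : ℝ} {x : ℝ² × ℝ²} {z : ℝ²}
    (hV : V ⊆ {z | |z 1| < 1}) (hh : 0 ≤ h) (hr : μ + (1 + h) < r)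
    (hx : x ∈ trappedSegments r h μ a b) (hxV : x ∈ segmentsIn V r) (hc : c ∈ Icc a b)
    (hz : z ∈ segment ℝ x.1 x.2) : |z 0 - c| ≤ μ + (b - a) := by
  obtain ⟨h1, h2⟩ := abs_apply_one_lt_of_mem_segmentsIn hV hxV
  have hsteep := lt_abs_sub_of_mem_trappedSegments hx hr
  have hne : x.1 1 ≠ x.2 1 := sub_ne_zero.1 (abs_pos.1 (by linarith))
  have hX : horizontalCrossing x.1 x.2 h ∈ segment ℝ x.1 x.2 :=
    horizontalCrossing_mem_segment hne
      (mem_uIcc_of_le_abs_sub h1 h2 hsteep.le (abs_of_nonneg hh).le)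
  calc |z 0 - c| ≤ |z 0 - horizontalCrossing x.1 x.2 h 0| + |horizontalCrossing x.1 x.2 h 0 - c| :=
        abs_sub_le _ _ _
    _ ≤ |x.1 0 - x.2 0| + (b - a) := by
        simp only [← Real.dist_eq]
        exact add_le_add (Real.dist_le_of_mem_uIcc
          (EuclideanSpace.apply_mem_uIcc_of_mem_segment hz 0)
          (EuclideanSpace.apply_mem_uIcc_of_mem_segment hX 0)) (Real.dist_le_of_mem_Icc hx.2.2.1 hc)
    _ ≤ μ + (b - a) := by linarith [hx.2.1]

/-- In the open horizontal strip U of height 2, for any segment length r greater than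
half the height and any δ > 0, one can remove a closed discrete set of points S from U so
that any moving segment of length r confined to U \ S that starts vertical (with first
coordinate c) stays in the vertical strip of width δ centered on the segment. -/
theorem vertical_segment_trapped_in_strip (r δ : ℝ) (hr : 1 < r) (hδ : 0 < δ) :
    ∃ S : Set (EuclideanSpace ℝ (Fin 2)),
      S ⊆ {z : EuclideanSpace ℝ (Fin 2) | |z 1| < 1} ∧
      IsClosed S ∧ DiscreteTopology S ∧
      ∀ (p q : ℝ → EuclideanSpace ℝ (Fin 2)) (c : ℝ),
        ContinuousOn p (Set.Icc 0 1) → ContinuousOn q (Set.Icc 0 1) →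
        (∀ t ∈ Set.Icc (0 : ℝ) 1, ‖p t - q t‖ = r ∧
          segment ℝ (p t) (q t) ⊆ {z : EuclideanSpace ℝ (Fin 2) | |z 1| < 1} \ S) →
        (p 0) 0 = c → (q 0) 0 = c →
        ∀ t ∈ Set.Icc (0 : ℝ) 1, ∀ z ∈ segment ℝ (p t) (q t), |z 0 - c| ≤ δ / 2 := by
  obtain ⟨h, μ, hh, hh1, hμ, hμr, hμδ⟩ : ∃ h μ : ℝ, 0 < h ∧ h < 1 ∧ 0 < μ ∧ μ + (1 + h) < r ∧
      μ + h * μ ≤ δ / 2 := by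
    refine ⟨min (1 / 2) ((r - 1) / 3), min (δ / 4) ((r - 1) / 3), by positivity,
      (min_le_left _ _).trans_lt (by norm_num), by positivity, ?_, ?_⟩
    · linarith [min_le_right (1 / 2) ((r - 1) / 3), min_le_right (δ / 4) ((r - 1) / 3)]
    · nlinarith [min_le_left (1 / 2) ((r - 1) / 3), min_le_left (δ / 4) ((r - 1) / 3),
        (by positivity : 0 < min (δ / 4) ((r - 1) / 3))]
  have hε : 0 < h * μ := by positivity
  refine ⟨heightGrid h (h * μ), heightGrid_subset_strip hh hh1, isClosed_heightGrid hh hε,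
    discreteTopology_heightGrid hh hε, ?_⟩
  intro p q c hp hq hpq hpc hqc t ht z hz
  obtain ⟨k, hkc, hck⟩ := (existsUnique_zsmul_near_of_pos hε c).exists
  have hc : c ∈ Icc (k * (h * μ)) ((k + 1) * (h * μ)) := by
    simp only [zsmul_eq_mul, Int.cast_add, Int.cast_one] at hkc hck
    exact ⟨hkc, hck.le⟩
  have htrap := mapsTo_Icc_of_isClosed_of_mem_nhdsWithin (hp.prodMk hq)
    (A := segmentsIn _ r) hpq (isClosed_trappedSegments (by linarith))
    (fun x hx => trappedSegments_mem_nhdsWithin hh le_rfl hμr hx.1 hx.2)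
    (mem_trappedSegments_of_vertical (hpq 0 ⟨le_rfl, zero_le_one⟩).1 hpc hqc hμ.le hc) ht
  calc |z 0 - c| ≤ μ + ((k + 1) * (h * μ) - k * (h * μ)) :=
        abs_sub_le_of_mem_trappedSegments sdiff_subset hh.le hμr htrap (hpq t ht) hc hz
    _ ≤ δ / 2 := by linarith
end
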